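/- arXiv:1712.00261 — 6 statements merged into one kernel-verified Lean document; each statement's English description precedes it below -/
import Mathlib

section
/- Let L be a finite-dimensional nilpotent Lie algebra of dimension n over a field. Then the Schur multiplier M(L) satisfies dim M(L) ≤ n(n-1)/2. -/
open Module

/-- The Schur multiplier rank: for the canonical free presentation
`0 → R → F → L → 0` with `F` the free Lie algebra on the set `L`,
this is `dim ((R ⊓ [F,F]) / [F,R])`. -/
noncomputable def schurRank (K : Type*) (L : Type*) [Field K] [LieRing L] [LieAlgebra K L] :
    Cardinal :=
  let F := FreeLieAlgebra K L
  let π : F →ₗ⁅K⁆ L := FreeLieAlgebra.lift K (id : L → L)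
  let R : LieIdeal K F := π.ker
  let A : Submodule K F :=
    LieSubmodule.toSubmodule (R ⊓ ⁅(⊤ : LieIdeal K F), (⊤ : LieIdeal K F)⁆)
  let B : Submodule K F := LieSubmodule.toSubmodule ⁅(⊤ : LieIdeal K F), R⁆
  Module.rank K (A ⧸ (B.comap A.subtype))

/-! Modulo `⁅F, R⁆`, the class of a bracket `⁅a, c⁆` depends only on `π a` and `π c`. Through a
linear section of `π` it is therefore the value of an alternating bilinear map on `L`, so the image
of `⁅F, F⁆` in `F ⧸ ⁅F, R⁆` is a quotient of `⋀² L`, of dimension `n.choose 2`. The multiplier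
`(R ⊓ ⁅F, F⁆) ⧸ ⁅F, R⁆` embeds into that image. -/

namespace LinearMap

def IsAlt.toAlternatingMap {R M N : Type*} [CommRing R] [AddCommGroup M] [Module R M]
    [AddCommGroup N] [Module R N] {ψ : M →ₗ[R] M →ₗ[R] N} (hψ : ψ.IsAlt) :
    M [⋀^Fin 2]→ₗ[R] N where
  toMultilinearMap :=
    LinearMap.uncurryLeft (M := fun _ => M)
      ((MultilinearMap.ofSubsingletonₗ R R M N (0 : Fin 1)).toLinearMap ∘ₗ ψ)
  map_eq_zero_of_eq' v i j hv hij := by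
    have h01 : v 0 = v 1 := by
      fin_cases i <;> fin_cases j <;> simp_all
    show ψ (v 0) (v 1) = 0
    rw [h01]
    exact hψ (v 1)

theorem IsAlt.rank_span_le {K M N : Type*} [Field K] [AddCommGroup M] [Module K M]
    [FiniteDimensional K M] [AddCommGroup N] [Module K N] {ψ : M →ₗ[K] M →ₗ[K] N}
    (hψ : ψ.IsAlt) :
    Module.rank K (Submodule.span K {ψ x y | (x : M) (y : M)}) ≤ (finrank K M).choose 2 := by
  let f := exteriorPower.alternatingMapLinearEquiv hψ.toAlternatingMap
  have hspan : Submodule.span K {ψ x y | (x : M) (y : M)} ≤ range f := by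
    rw [Submodule.span_le]
    rintro _ ⟨x, y, rfl⟩
    exact ⟨exteriorPower.ιMulti K 2 ![x, y],
      exteriorPower.alternatingMapLinearEquiv_apply_ιMulti _ _⟩
  calc Module.rank K (Submodule.span K {ψ x y | (x : M) (y : M)})
      ≤ Module.rank K (range f) := Submodule.rank_mono hspan
    _ = finrank K (range f) := (finrank_eq_rank K _).symm
    _ ≤ (finrank K M).choose 2 := by
      rw [← exteriorPower.finrank_eq]
      exact_mod_cast finrank_range_le f

end LinearMap

theorem Submodule.rank_quotient_comap_subtype_eq {R V : Type*} [Ring R] [AddCommGroup V]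
    [Module R V] (A B : Submodule R V) :
    Module.rank R (A ⧸ B.comap A.subtype) = Module.rank R (A.map B.mkQ) := by
  have hker : LinearMap.ker (B.mkQ ∘ₗ A.subtype) = B.comap A.subtype := by
    rw [LinearMap.ker_comp, ker_mkQ]
  have hrange : LinearMap.range (B.mkQ ∘ₗ A.subtype) = A.map B.mkQ := by
    rw [LinearMap.range_comp, range_subtype]
  rw [← hker, ← hrange]
  exact (B.mkQ ∘ₗ A.subtype).quotKerEquivRange.rank_eq

namespace LieHom

variable {K F L : Type*} [Field K] [LieRing F] [LieAlgebra K F] [LieRing L] [LieAlgebra K L]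

/-- `dim ((ker π ⊓ [F,F]) / [F, ker π])`: the Schur multiplier of `L` when `π` is a free
presentation, and `schurRank` for the canonical one. -/
noncomputable def multiplierRank (π : F →ₗ⁅K⁆ L) : Cardinal :=
  let A : Submodule K F :=
    LieSubmodule.toSubmodule (π.ker ⊓ ⁅(⊤ : LieIdeal K F), (⊤ : LieIdeal K F)⁆)
  let B : Submodule K F := LieSubmodule.toSubmodule ⁅(⊤ : LieIdeal K F), π.ker⁆
  Module.rank K (A ⧸ B.comap A.subtype)

theorem lie_sub_lie_mem_lie_ker (π : F →ₗ⁅K⁆ L) {a a' c c' : F} (ha : π a = π a')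
    (hc : π c = π c') : ⁅a, c⁆ - ⁅a', c'⁆ ∈ ⁅(⊤ : LieIdeal K F), π.ker⁆ := by
  have ha' : a - a' ∈ π.ker := by rw [LieHom.mem_ker, map_sub, ha, sub_self]
  have hc' : c - c' ∈ π.ker := by rw [LieHom.mem_ker, map_sub, hc, sub_self]
  have hsplit : ⁅a, c⁆ - ⁅a', c'⁆ = -⁅c, a - a'⁆ + ⁅a', c - c'⁆ := by
    rw [lie_skew, sub_lie, lie_sub]; abel
  rw [hsplit]
  exact add_mem (neg_mem (LieSubmodule.lie_mem_lie (LieSubmodule.mem_top c) ha'))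
    (LieSubmodule.lie_mem_lie (LieSubmodule.mem_top a') hc')

variable (π : F →ₗ⁅K⁆ L)

noncomputable def bracketMod (σ : L →ₗ[K] F) :
    L →ₗ[K] L →ₗ[K] F ⧸ LieSubmodule.toSubmodule ⁅(⊤ : LieIdeal K F), π.ker⁆ :=
  LinearMap.mk₂ K (fun x y => Submodule.mkQ _ ⁅σ x, σ y⁆)
    (fun x x' y => by simp only [map_add, add_lie])
    (fun c x y => by simp only [map_smul, smul_lie])
    (fun x y y' => by simp only [map_add, lie_add])
    (fun c x y => by simp only [map_smul, lie_smul])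

theorem bracketMod_apply (σ : L →ₗ[K] F) (x y : L) :
    π.bracketMod σ x y = Submodule.mkQ _ ⁅σ x, σ y⁆ := rfl

theorem isAlt_bracketMod (σ : L →ₗ[K] F) : (π.bracketMod σ).IsAlt := fun x => by
  rw [bracketMod_apply, lie_self, map_zero]

theorem map_mkQ_lie_top_le_span {σ : L →ₗ[K] F} (hσ : ∀ x, π (σ x) = x) :
    (LieSubmodule.toSubmodule ⁅(⊤ : LieIdeal K F), (⊤ : LieIdeal K F)⁆).map (Submodule.mkQ _) ≤
      Submodule.span K {π.bracketMod σ x y | (x : L) (y : L)} := by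
  rw [Submodule.map_le_iff_le_comap, LieSubmodule.lieIdeal_oper_eq_linear_span,
    Submodule.span_le]
  rintro _ ⟨a, c, rfl⟩
  refine Submodule.subset_span ⟨π a, π c, ?_⟩
  rw [bracketMod_apply, Submodule.mkQ_apply, Submodule.mkQ_apply, Submodule.Quotient.eq]
  exact π.lie_sub_lie_mem_lie_ker (hσ _) (hσ _)

theorem multiplierRank_le_choose [FiniteDimensional K L] (hπ : Function.Surjective π) :
    π.multiplierRank ≤ (finrank K L).choose 2 := by
  obtain ⟨σ, hσ⟩ := (π : F →ₗ[K] L).exists_rightInverse_of_surjective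
    (LinearMap.range_eq_top.2 hπ)
  have hπσ : ∀ x, π (σ x) = x := fun x => LinearMap.congr_fun hσ x
  calc π.multiplierRank
      = _ := Submodule.rank_quotient_comap_subtype_eq _ _
    _ ≤ _ := Submodule.rank_mono <|
        (Submodule.map_mono inf_le_right).trans (π.map_mkQ_lie_top_le_span hπσ)
    _ ≤ (finrank K L).choose 2 := (π.isAlt_bracketMod σ).rank_span_le

end LieHom

theorem schur_multiplier_le_moneyhun_general (K : Type*) (L : Type*) [Field K] [LieRing L]
    [LieAlgebra K L] [FiniteDimensional K L]
    (n : ℕ) (hn : finrank K L = n) :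
    schurRank K L ≤ ((n * (n - 1) / 2 : ℕ) : Cardinal) := by
  have hsurj : Function.Surjective (FreeLieAlgebra.lift K (id : L → L)) := fun x =>
    ⟨FreeLieAlgebra.of K x, FreeLieAlgebra.lift_of_apply _ _⟩
  rw [← hn, ← Nat.choose_two_right]
  exact (FreeLieAlgebra.lift K id).multiplierRank_le_choose hsurj

theorem schur_multiplier_le_moneyhun (K : Type*) (L : Type*) [Field K] [LieRing L]
    [LieAlgebra K L] [FiniteDimensional K L] (h : LieRing.IsNilpotent L)
    (n : ℕ) (hn : finrank K L = n) :
    schurRank K L ≤ ((n * (n - 1) / 2 : ℕ) : Cardinal) :=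
  schur_multiplier_le_moneyhun_general K L n hn
end

section
/- Let L be a finite-dimensional non-abelian nilpotent Lie algebra of dimension n whose derived subalgebra L² = [L,L] has dimension m ≥ 1. Then dim M(L) ≤ (n+m-2)(n-m-1)/2 + 1. -/
open Module

/-!
Write `V = F² / [F, R]` for the free presentation `L = F / R`. For a linear section `σ` of
`F → L`, `ω(a, b) = [σ a, σ b] mod [F, R]` is an alternating 2-cocycle on `L` with values in `V`
whose values span `V`, and the map `V → L` induced by `F → L` has image `L²` and kernel containing
`M(L) = (R ∩ F²) / [F, R]`; hence `dim M(L) + m ≤ dim V`.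

Let `B` be a complement of `L²`, so `dim B = d = n - m`. Nilpotency forbids `[B, B] = 0`, so
there are `x₀, y₀ ∈ B` with `u = [x₀, y₀] ≠ 0`; write `L² = K u ⊕ C`. Let `W` be the span of
`ω(B, B)`, `ω(B, C)`, `ω(x₀, u)` and `ω(y₀, u)`. The cocycle identity shows that the `x` with
`ω(x, L) ⊆ W` form a subspace containing `B`, and containing every `x` with `[L, x]` inside it;
as `L` is nilpotent, this subspace is `L`, so `W = V`. Counting generators,
`dim V ≤ d(d-1)/2 + 2 + d(m-1)`, which rearranges to the bound.
-/

theorem Submodule.apply_mem_of_mem_span {R M N P : Type*} [CommSemiring R] [AddCommMonoid M]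
    [AddCommMonoid N] [AddCommMonoid P] [Module R M] [Module R N] [Module R P]
    {f : M →ₗ[R] N →ₗ[R] P} {s : Set M} {t : Set N} {W : Submodule R P}
    (h : ∀ x ∈ s, ∀ y ∈ t, f x y ∈ W) {x : M} {y : N} (hx : x ∈ span R s) (hy : y ∈ span R t) :
    f x y ∈ W := by
  refine Submodule.map₂_le.mp ?_ x hx y hy
  rw [Submodule.map₂_span_span, Submodule.span_le]
  rintro _ ⟨x, hx, y, hy, rfl⟩
  exact h x hx y hy

theorem Module.Basis.span_range_coe {R M ι : Type*} [Semiring R] [AddCommMonoid M] [Module R M]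
    {p : Submodule R M} (b : Basis ι R p) :
    Submodule.span R (Set.range fun i => (b i : M)) = p := by
  rw [show (fun i => (b i : M)) = p.subtype ∘ b from rfl, Set.range_comp, Submodule.span_image,
    b.span_eq, Submodule.map_subtype_top]

section Nilpotent

variable {R L M : Type*} [CommRing R] [LieRing L] [LieAlgebra R L] [AddCommGroup M] [Module R M]
  [LieRingModule L M] [LieModule R L M]

theorem LieModule.submodule_eq_top_of_forall_lie_mem [LieModule.IsNilpotent L M]
    (Z : Submodule R M) (hZ : ∀ m, (∀ x : L, ⁅x, m⁆ ∈ Z) → m ∈ Z) : Z = ⊤ := by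
  obtain ⟨k, hk⟩ :=
    (LieModule.isNilpotent_iff_exists_ucs_eq_top R (L := L) (M := M)).mp inferInstance
  have hucs : ∀ j, ((⊥ : LieSubmodule R L M).ucs j : Submodule R M) ≤ Z := by
    intro j
    induction j with
    | zero => simp
    | succ j ih =>
      intro m hm
      rw [LieSubmodule.ucs_succ, LieSubmodule.mem_toSubmodule, LieSubmodule.mem_normalizer] at hm
      exact hZ m fun x => ih (hm x)
  simpa [hk] using hucs k

theorem LieModule.lowerCentralSeries_eq_bot_of_le_succ [LieModule.IsNilpotent L M] {k : ℕ}
    (h : lowerCentralSeries R L M k ≤ lowerCentralSeries R L M (k + 1)) :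
    lowerCentralSeries R L M k = ⊥ := by
  have hle : ∀ j, lowerCentralSeries R L M k ≤ lowerCentralSeries R L M (k + j) := by
    intro j
    induction j with
    | zero => rfl
    | succ j ih =>
      refine h.trans ?_
      rw [← add_assoc, lowerCentralSeries_succ, lowerCentralSeries_succ]
      exact LieSubmodule.mono_lie_right _ ih
  obtain ⟨j, hj⟩ := LieModule.IsNilpotent.nilpotent R L M
  exact eq_bot_iff.mpr <| (hle j).trans <|
    (antitone_lowerCentralSeries R L M (Nat.le_add_left j k)).trans hj.le

end Nilpotent

section Derived

variable {K L : Type*} [CommRing K] [LieRing L] [LieAlgebra K L]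

variable (K L) in
abbrev derivedSubmodule : Submodule K L :=
  LieSubmodule.toSubmodule ⁅(⊤ : LieIdeal K L), (⊤ : LieIdeal K L)⁆

theorem lie_mem_derivedSubmodule (x y : L) : ⁅x, y⁆ ∈ derivedSubmodule K L :=
  LieSubmodule.lie_mem_lie (LieSubmodule.mem_top x) (LieSubmodule.mem_top y)

theorem derivedSubmodule_le_iff {P : Submodule K L} :
    derivedSubmodule K L ≤ P ↔ ∀ x y : L, ⁅x, y⁆ ∈ P := by
  refine ⟨fun h x y => h (lie_mem_derivedSubmodule x y), fun h => ?_⟩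
  rw [derivedSubmodule, LieSubmodule.lieIdeal_oper_eq_linear_span', Submodule.span_le]
  rintro _ ⟨x, -, y, -, rfl⟩
  exact h x y

theorem exists_lie_ne_zero_of_sup_derivedSubmodule_eq_top [LieRing.IsNilpotent L]
    {B : Submodule K L} (hB : B ⊔ derivedSubmodule K L = ⊤) (hL : derivedSubmodule K L ≠ ⊥) :
    ∃ x ∈ B, ∃ y ∈ B, ⁅x, y⁆ ≠ 0 := by
  by_contra! hBB
  have hγ : LieModule.lowerCentralSeries K L L 1 = ⁅(⊤ : LieIdeal K L), ⊤⁆ := rfl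
  refine hL ((LieSubmodule.toSubmodule_eq_bot _).mpr (hγ ▸ ?_))
  apply LieModule.lowerCentralSeries_eq_bot_of_le_succ
  have split : ∀ x : L, ∃ b ∈ B, ∃ c ∈ derivedSubmodule K L, b + c = x := fun x =>
    Submodule.mem_sup.mp (hB ▸ Submodule.mem_top)
  rw [hγ, LieSubmodule.lie_le_iff]
  rintro x - y -
  obtain ⟨b, hb, c, hc, rfl⟩ := split x
  obtain ⟨b', hb', c', hc', rfl⟩ := split y
  have hcL : ∀ z, ∀ c ∈ derivedSubmodule K L, ⁅z, c⁆ ∈ LieModule.lowerCentralSeries K L L 2 :=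
    fun z c hc => LieSubmodule.lie_mem_lie (LieSubmodule.mem_top z) hc
  rw [add_lie, lie_add, lie_add, hBB b hb b' hb', zero_add, ← lie_skew c b']
  exact add_mem (hcL _ _ hc') (add_mem (neg_mem (hcL _ _ hc)) (hcL _ _ hc'))

end Derived

section Cocycle

open LieModule.Cohomology

variable {K L V : Type*} [CommRing K] [LieRing L] [LieAlgebra K L] [AddCommGroup V] [Module K V]
  {ω : L →ₗ[K] L →ₗ[K] V}

theorem apply_eq_neg_apply_of_mem_twoCochain (halt : ω ∈ twoCochain K L V) (x y : L) :
    ω x y = -ω y x :=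
  (twoCochain_skew ⟨ω, halt⟩ y x).symm

theorem apply_mem_span_of_lt {ι : Type*} [LinearOrder ι] (halt : ω ∈ twoCochain K L V)
    {e : ι → L} {x y : L} (hx : x ∈ Submodule.span K (Set.range e))
    (hy : y ∈ Submodule.span K (Set.range e)) :
    ω x y ∈ Submodule.span K {v | ∃ i j, i < j ∧ ω (e i) (e j) = v} := by
  refine Submodule.apply_mem_of_mem_span ?_ hx hy
  rintro _ ⟨i, rfl⟩ _ ⟨j, rfl⟩
  rcases lt_trichotomy i j with hij | rfl | hij
  · exact Submodule.subset_span ⟨i, j, hij, rfl⟩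
  · rw [mem_twoCochain_iff.mp halt]
    exact zero_mem _
  · rw [apply_eq_neg_apply_of_mem_twoCochain halt]
    exact neg_mem (Submodule.subset_span ⟨j, i, hij, rfl⟩)

/-- `hω` is the cocycle identity for trivial coefficients, cf. `mem_twoCocycle_iff_of_trivial`. -/
theorem forall_apply_mem_of_generators [LieRing.IsNilpotent L] (halt : ω ∈ twoCochain K L V)
    (hω : ∀ x y z, ω x ⁅y, z⁆ = ω ⁅x, y⁆ z + ω y ⁅x, z⁆) {B C : Submodule K L} {x₀ y₀ : L}
    (hB : B ⊔ derivedSubmodule K L = ⊤) (hC : derivedSubmodule K L ≤ K ∙ ⁅x₀, y₀⁆ ⊔ C)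
    (hx₀ : x₀ ∈ B) (hy₀ : y₀ ∈ B) {W : Submodule K V}
    (hBB : ∀ x ∈ B, ∀ y ∈ B, ω x y ∈ W) (hBC : ∀ x ∈ B, ∀ c ∈ C, ω x c ∈ W)
    (hx₀W : ω x₀ ⁅x₀, y₀⁆ ∈ W) (hy₀W : ω y₀ ⁅x₀, y₀⁆ ∈ W) (a b : L) : ω a b ∈ W := by
  have skew := apply_eq_neg_apply_of_mem_twoCochain halt
  have split : ∀ y, ∃ b ∈ B, ∃ c ∈ derivedSubmodule K L, b + c = y := fun y =>
    Submodule.mem_sup.mp (hB ▸ Submodule.mem_top)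
  have hL2 : ∀ x ∈ B, ω x ⁅x₀, y₀⁆ ∈ W → ∀ c ∈ derivedSubmodule K L, ω x c ∈ W := by
    intro x hx hxu c hc
    obtain ⟨_, hv, c', hc', rfl⟩ := Submodule.mem_sup.mp (hC hc)
    obtain ⟨t, rfl⟩ := Submodule.mem_span_singleton.mp hv
    rw [map_add, map_smul]
    exact add_mem (W.smul_mem t hxu) (hBC x hx c' hc')
  -- By the cocycle identity, `ω x ⁅x₀, y₀⁆` only involves `ω y₀` and `ω x₀` on `L²`.
  have hBu : ∀ x ∈ B, ω x ⁅x₀, y₀⁆ ∈ W := by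
    intro x hx
    rw [hω, skew ⁅x, x₀⁆ y₀]
    exact add_mem (neg_mem (hL2 y₀ hy₀ hy₀W _ (lie_mem_derivedSubmodule _ _)))
      (hL2 x₀ hx₀ hx₀W _ (lie_mem_derivedSubmodule _ _))
  have hBL : ∀ x ∈ B, ∀ y, ω x y ∈ W := by
    intro x hx y
    obtain ⟨b, hb, c, hc, rfl⟩ := split y
    rw [map_add]
    exact add_mem (hBB x hx b hb) (hL2 x hx (hBu x hx) c hc)
  let Z : Submodule K L := ⨅ y, W.comap (ω.flip y)
  have hZ : ∀ m, m ∈ Z ↔ ∀ y, ω m y ∈ W := by simp [Z]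
  have hZ_top : Z = ⊤ := by
    refine LieModule.submodule_eq_top_of_forall_lie_mem (L := L) Z fun m hm =>
      (hZ m).mpr fun y => ?_
    have hm' : ∀ x, ⁅m, x⁆ ∈ Z := fun x => by rw [← lie_skew]; exact neg_mem (hm x)
    obtain ⟨b, hb, c, hc, rfl⟩ := split y
    have hmL2 : derivedSubmodule K L ≤ W.comap (ω m) := derivedSubmodule_le_iff.mpr fun x x' => by
      rw [Submodule.mem_comap, hω, skew x ⁅m, x'⁆]
      exact add_mem ((hZ _).mp (hm' x) x') (neg_mem ((hZ _).mp (hm' x') x))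
    rw [map_add, skew m b]
    exact add_mem (neg_mem (hBL b hb m)) (hmL2 hc)
  exact (hZ a).mp (hZ_top ▸ Submodule.mem_top) b

end Cocycle

section Counting

open LieModule.Cohomology

variable {K L V : Type*} [Field K] [LieRing L] [LieAlgebra K L] [AddCommGroup V] [Module K V]

theorem exists_generating_subspaces [FiniteDimensional K L] [LieRing.IsNilpotent L]
    (hL : derivedSubmodule K L ≠ ⊥) :
    ∃ (B C : Submodule K L) (x₀ y₀ : L), B ⊔ derivedSubmodule K L = ⊤ ∧
      derivedSubmodule K L ≤ K ∙ ⁅x₀, y₀⁆ ⊔ C ∧ x₀ ∈ B ∧ y₀ ∈ B ∧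
      finrank K B + finrank K (derivedSubmodule K L) = finrank K L ∧
      finrank K C + 1 = finrank K (derivedSubmodule K L) := by
  obtain ⟨B, hB⟩ := (derivedSubmodule K L).exists_isCompl
  have hB_sup : B ⊔ derivedSubmodule K L = ⊤ := sup_comm B _ ▸ hB.sup_eq_top
  obtain ⟨x₀, hx₀, y₀, hy₀, hu⟩ := exists_lie_ne_zero_of_sup_derivedSubmodule_eq_top hB_sup hL
  obtain ⟨D, hD⟩ := (K ∙ ⁅x₀, y₀⁆).exists_isCompl
  have hu_le : K ∙ ⁅x₀, y₀⁆ ≤ derivedSubmodule K L :=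
    (Submodule.span_singleton_le_iff_mem _ _).mpr (lie_mem_derivedSubmodule x₀ y₀)
  have hsup : K ∙ ⁅x₀, y₀⁆ ⊔ D ⊓ derivedSubmodule K L = derivedSubmodule K L := by
    rw [← sup_inf_assoc_of_le D hu_le, hD.sup_eq_top, top_inf_eq]
  have hinf : K ∙ ⁅x₀, y₀⁆ ⊓ (D ⊓ derivedSubmodule K L) = ⊥ :=
    eq_bot_iff.mpr <| (inf_le_inf_left _ inf_le_left).trans hD.inf_eq_bot.le
  refine ⟨B, D ⊓ derivedSubmodule K L, x₀, y₀, hB_sup, hsup.ge, hx₀, hy₀, ?_, ?_⟩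
  · rw [add_comm, Submodule.finrank_add_eq_of_isCompl hB]
  · have := Submodule.finrank_sup_add_finrank_inf_eq (K ∙ ⁅x₀, y₀⁆) (D ⊓ derivedSubmodule K L)
    rw [hsup, hinf, finrank_bot, finrank_span_singleton hu] at this
    omega

variable {ω : L →ₗ[K] L →ₗ[K] V}

theorem rank_le_of_generating_subspaces [LieRing.IsNilpotent L] (halt : ω ∈ twoCochain K L V)
    (hω : ∀ x y z, ω x ⁅y, z⁆ = ω ⁅x, y⁆ z + ω y ⁅x, z⁆)
    (hspan : Submodule.span K {v | ∃ a b, ω a b = v} = ⊤) {B C : Submodule K L}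
    [FiniteDimensional K B] [FiniteDimensional K C] {x₀ y₀ : L}
    (hB : B ⊔ derivedSubmodule K L = ⊤) (hC : derivedSubmodule K L ≤ K ∙ ⁅x₀, y₀⁆ ⊔ C)
    (hx₀ : x₀ ∈ B) (hy₀ : y₀ ∈ B) :
    Module.rank K V ≤ ((finrank K B).choose 2 + 2 + finrank K B * finrank K C : ℕ) := by
  classical
  let e := Module.finBasis K B
  let f := Module.finBasis K C
  let pairs : Finset (Fin (finrank K B) × Fin (finrank K B)) := {p | p.1 < p.2}
  let S : Finset V := pairs.image (fun p => ω (e p.1) (e p.2)) ∪ {ω x₀ ⁅x₀, y₀⁆, ω y₀ ⁅x₀, y₀⁆} ∪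
    Finset.univ.image (fun p : Fin (finrank K B) × Fin (finrank K C) => ω (e p.1) (f p.2))
  have mem_S : ∀ v ∈ S, v ∈ Submodule.span K (S : Set V) := fun v hv => Submodule.subset_span hv
  simp only [S, Finset.mem_union, Finset.mem_image, Finset.mem_insert,
    Finset.mem_singleton] at mem_S
  have hBB : ∀ x ∈ B, ∀ y ∈ B, ω x y ∈ Submodule.span K (S : Set V) := by
    intro x hx y hy
    rw [← e.span_range_coe] at hx hy
    refine Submodule.span_le.mpr ?_ (apply_mem_span_of_lt halt hx hy)
    rintro _ ⟨i, j, hij, rfl⟩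
    exact mem_S _ (.inl (.inl ⟨(i, j), Finset.mem_filter.mpr ⟨Finset.mem_univ _, hij⟩, rfl⟩))
  have hBC : ∀ x ∈ B, ∀ c ∈ C, ω x c ∈ Submodule.span K (S : Set V) := by
    intro x hx c hc
    rw [← e.span_range_coe] at hx
    rw [← f.span_range_coe] at hc
    refine Submodule.apply_mem_of_mem_span ?_ hx hc
    rintro _ ⟨i, rfl⟩ _ ⟨s, rfl⟩
    exact mem_S _ (.inr ⟨(i, s), Finset.mem_univ _, rfl⟩)
  have hS : Submodule.span K (S : Set V) = ⊤ := by
    rw [eq_top_iff, ← hspan, Submodule.span_le]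
    rintro _ ⟨a, b, rfl⟩
    exact forall_apply_mem_of_generators halt hω hB hC hx₀ hy₀ hBB hBC
      (mem_S _ (.inl (.inr (.inl rfl)))) (mem_S _ (.inl (.inr (.inr rfl)))) a b
  have hcard : S.card ≤ (finrank K B).choose 2 + 2 + finrank K B * finrank K C := by
    refine (Finset.card_union_le _ _).trans (add_le_add ((Finset.card_union_le _ _).trans
      (add_le_add (Finset.card_image_le.trans_eq ?_) (Finset.card_le_two))) ?_)
    · exact Fintype.card_product_filter_lt.trans (by rw [Fintype.card_fin])
    · exact Finset.card_image_le.trans_eq (by rw [Finset.card_univ, Fintype.card_prod,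
        Fintype.card_fin, Fintype.card_fin])
  calc Module.rank K V = Module.rank K (⊤ : Submodule K V) := rank_top K V |>.symm
    _ = Module.rank K (Submodule.span K (S : Set V)) := by rw [hS]
    _ ≤ S.card := rank_span_finset_le S
    _ ≤ _ := by exact_mod_cast hcard

theorem rank_le_of_cocycle [FiniteDimensional K L] [LieRing.IsNilpotent L]
    (halt : ω ∈ twoCochain K L V) (hω : ∀ x y z, ω x ⁅y, z⁆ = ω ⁅x, y⁆ z + ω y ⁅x, z⁆)
    (hspan : Submodule.span K {v | ∃ a b, ω a b = v} = ⊤) (hL : derivedSubmodule K L ≠ ⊥) :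
    Module.rank K V ≤ ((finrank K L - finrank K (derivedSubmodule K L)).choose 2 + 2 +
      (finrank K L - finrank K (derivedSubmodule K L)) *
        (finrank K (derivedSubmodule K L) - 1) : ℕ) := by
  obtain ⟨B, C, x₀, y₀, hB, hC, hx₀, hy₀, hdimB, hdimC⟩ := exists_generating_subspaces hL
  rw [show finrank K L - finrank K (derivedSubmodule K L) = finrank K B by omega,
    show finrank K (derivedSubmodule K L) - 1 = finrank K C by omega]
  exact rank_le_of_generating_subspaces halt hω hspan hB hC hx₀ hy₀

end Counting

section SchurCover

open LieModule.Cohomology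

variable {K L F : Type*} [CommRing K] [LieRing L] [LieAlgebra K L] [LieRing F] [LieAlgebra K F]
  (π : F →ₗ⁅K⁆ L)

/-- `F² / [F, R]` for `R = ker π`; it contains the Schur multiplier `(R ∩ F²) / [F, R]`. -/
abbrev SchurCover : Type _ :=
  derivedSubmodule K F ⧸ (LieSubmodule.toSubmodule ⁅(⊤ : LieIdeal K F), π.ker⁆).comap
    (derivedSubmodule K F).subtype

noncomputable def coverBracket : F →ₗ[K] F →ₗ[K] SchurCover π :=
  LinearMap.mk₂ K (fun x y => Submodule.Quotient.mk ⟨⁅x, y⁆, lie_mem_derivedSubmodule x y⟩)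
    (fun x x' y => congrArg _ (Subtype.ext (add_lie x x' y)))
    (fun t x y => congrArg _ (Subtype.ext (smul_lie t x y)))
    (fun x y y' => congrArg _ (Subtype.ext (lie_add x y y')))
    (fun t x y => congrArg _ (Subtype.ext (lie_smul t x y)))

noncomputable def coverProj : SchurCover π →ₗ[K] L :=
  Submodule.liftQ _ (π.toLinearMap ∘ₗ (derivedSubmodule K F).subtype) fun _ hx =>
    LinearMap.mem_ker.mpr (LieHom.mem_ker.mp (LieSubmodule.lie_le_right π.ker ⊤ hx))

variable {π}

theorem coverBracket_apply (x y : F) :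
    coverBracket π x y = Submodule.Quotient.mk ⟨⁅x, y⁆, lie_mem_derivedSubmodule x y⟩ :=
  rfl

theorem coverProj_coverBracket (x y : F) : coverProj π (coverBracket π x y) = ⁅π x, π y⁆ := by
  rw [coverBracket_apply, coverProj, Submodule.liftQ_apply]
  exact π.map_lie x y

theorem coverBracket_leibniz (x y z : F) :
    coverBracket π x ⁅y, z⁆ = coverBracket π ⁅x, y⁆ z + coverBracket π y ⁅x, z⁆ := by
  simp only [coverBracket_apply, ← Submodule.Quotient.mk_add]
  exact congrArg _ (Subtype.ext (leibniz_lie x y z))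

theorem coverBracket_eq_zero_of_mem_ker_right (x : F) {r : F} (hr : r ∈ π.ker) :
    coverBracket π x r = 0 := by
  rw [coverBracket_apply, Submodule.Quotient.mk_eq_zero]
  exact LieSubmodule.lie_mem_lie (LieSubmodule.mem_top x) hr

theorem coverBracket_eq_zero_of_mem_ker_left {r : F} (hr : r ∈ π.ker) (y : F) :
    coverBracket π r y = 0 := by
  rw [coverBracket_apply, Submodule.Quotient.mk_eq_zero]
  show ⁅r, y⁆ ∈ ⁅(⊤ : LieIdeal K F), π.ker⁆
  rw [← lie_skew]
  exact neg_mem (LieSubmodule.lie_mem_lie (LieSubmodule.mem_top y) hr)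

theorem span_coverBracket_eq_top :
    Submodule.span K {v | ∃ x y, coverBracket π x y = v} = ⊤ := by
  set P := Submodule.span K {v | ∃ x y, coverBracket π x y = v}
  have hle :
      derivedSubmodule K F ≤ (P.comap (Submodule.mkQ _)).map (derivedSubmodule K F).subtype :=
    derivedSubmodule_le_iff.mpr fun x y =>
      ⟨⟨⁅x, y⁆, lie_mem_derivedSubmodule x y⟩, Submodule.subset_span ⟨x, y, rfl⟩, rfl⟩
  rw [eq_top_iff]
  rintro v -
  obtain ⟨⟨x, hx⟩, rfl⟩ := Submodule.Quotient.mk_surjective _ v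
  obtain ⟨x', hx', rfl⟩ := hle hx
  exact hx'

variable (π) in
noncomputable def schurCocycle (σ : L →ₗ[K] F) : L →ₗ[K] L →ₗ[K] SchurCover π :=
  (coverBracket π).compl₁₂ σ σ

variable {σ : L →ₗ[K] F}

theorem schurCocycle_mem_twoCochain : schurCocycle π σ ∈ twoCochain K L (SchurCover π) :=
  fun a => by
    rw [schurCocycle, LinearMap.compl₁₂_apply, coverBracket_apply, Submodule.Quotient.mk_eq_zero]
    simp

theorem coverBracket_eq_schurCocycle (hσ : ∀ a, π (σ a) = a) (x y : F) :
    coverBracket π x y = schurCocycle π σ (π x) (π y) := by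
  have hker : ∀ z, z - σ (π z) ∈ π.ker := fun z =>
    LieHom.mem_ker.mpr (by rw [map_sub, hσ, sub_self])
  rw [schurCocycle, LinearMap.compl₁₂_apply]
  calc coverBracket π x y
      = coverBracket π (x - σ (π x) + σ (π x)) (y - σ (π y) + σ (π y)) := by
        simp only [sub_add_cancel]
    _ = coverBracket π (σ (π x)) (σ (π y)) := by
        simp only [map_add, LinearMap.add_apply, coverBracket_eq_zero_of_mem_ker_left (hker x),
          coverBracket_eq_zero_of_mem_ker_right _ (hker y), zero_add]

theorem schurCocycle_leibniz (hσ : ∀ a, π (σ a) = a) (x y z : L) :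
    schurCocycle π σ x ⁅y, z⁆ =
      schurCocycle π σ ⁅x, y⁆ z + schurCocycle π σ y ⁅x, z⁆ := by
  have h := coverBracket_leibniz (π := π) (σ x) (σ y) (σ z)
  simpa only [coverBracket_eq_schurCocycle hσ, LieHom.map_lie, hσ] using h

theorem span_schurCocycle_eq_top (hσ : ∀ a, π (σ a) = a) :
    Submodule.span K {v | ∃ a b, schurCocycle π σ a b = v} = ⊤ := by
  refine eq_top_iff.mpr (span_coverBracket_eq_top.ge.trans (Submodule.span_mono ?_))
  rintro _ ⟨x, y, rfl⟩
  exact ⟨π x, π y, (coverBracket_eq_schurCocycle hσ x y).symm⟩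

end SchurCover

section Multiplier

variable {K L F : Type*} [Field K] [LieRing L] [LieAlgebra K L] [LieRing F] [LieAlgebra K F]
  {π : F →ₗ⁅K⁆ L}

theorem rank_schurMultiplier_add_finrank_derivedSubmodule_le [FiniteDimensional K L]
    (hπ : Function.Surjective π) :
    Module.rank K (LieSubmodule.toSubmodule (π.ker ⊓ ⁅(⊤ : LieIdeal K F), ⊤⁆) ⧸
        (LieSubmodule.toSubmodule ⁅(⊤ : LieIdeal K F), π.ker⁆).comap
          (LieSubmodule.toSubmodule (π.ker ⊓ ⁅(⊤ : LieIdeal K F), ⊤⁆)).subtype) +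
      finrank K (derivedSubmodule K L) ≤ Module.rank K (SchurCover π) := by
  set A := LieSubmodule.toSubmodule (π.ker ⊓ ⁅(⊤ : LieIdeal K F), ⊤⁆)
  have hA : A ≤ derivedSubmodule K F := inf_le_right
  set B := LieSubmodule.toSubmodule ⁅(⊤ : LieIdeal K F), π.ker⁆
  let incl := Submodule.mapQ (B.comap A.subtype) (B.comap (derivedSubmodule K F).subtype)
    (Submodule.inclusion hA) le_rfl
  have hincl : Function.Injective incl :=
    LinearMap.ker_eq_bot.mp (Submodule.ker_liftQ_eq_bot _ _ _ fun _ hx =>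
      (Submodule.Quotient.mk_eq_zero (B.comap (derivedSubmodule K F).subtype)).mp hx)
  have hker : LinearMap.range incl ≤ LinearMap.ker (coverProj π) := by
    rintro _ ⟨v, rfl⟩
    obtain ⟨⟨x, hx⟩, rfl⟩ := Submodule.Quotient.mk_surjective _ v
    exact (LieSubmodule.mem_inf _ _ _).mp hx |>.1
  have hrange : derivedSubmodule K L ≤ LinearMap.range (coverProj π) := by
    refine derivedSubmodule_le_iff.mpr fun a b => ?_
    obtain ⟨x, rfl⟩ := hπ a
    obtain ⟨y, rfl⟩ := hπ b
    exact ⟨coverBracket π x y, coverProj_coverBracket x y⟩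
  let q := (coverProj π).quotKerEquivRange
  have : FiniteDimensional K (SchurCover π ⧸ LinearMap.ker (coverProj π)) :=
    Module.Finite.equiv q.symm
  calc _ ≤ Module.rank K (LinearMap.ker (coverProj π)) +
        Module.rank K (SchurCover π ⧸ LinearMap.ker (coverProj π)) := by
        gcongr
        · exact (rank_range_of_injective incl hincl).symm.le.trans (Submodule.rank_mono hker)
        · rw [← finrank_eq_rank, q.finrank_eq]
          exact_mod_cast Submodule.finrank_mono hrange
    _ = Module.rank K (SchurCover π) := by
        rw [add_comm, Submodule.rank_quotient_add_rank]

end Multiplier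

theorem niroomand_bound_of_le {n m r : ℕ} (hm : 1 ≤ m) (hmn : m ≤ n)
    (h : r + m ≤ (n - m).choose 2 + 2 + (n - m) * (m - 1)) :
    r ≤ (n + m - 2) * (n - m - 1) / 2 + 1 := by
  obtain ⟨d, rfl⟩ := Nat.exists_eq_add_of_le' hmn
  obtain ⟨m, rfl⟩ := Nat.exists_eq_add_of_le' hm
  rw [Nat.add_sub_cancel, Nat.choose_two_right] at h
  rcases d with _ | d
  · simp only [zero_add, add_tsub_cancel_right, tsub_self, zero_mul, Nat.zero_div] at h ⊢
    omega
  · rw [show d + 1 + (m + 1) + (m + 1) - 2 = d + 1 + 2 * m by omega,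
      show d + 1 + (m + 1) - (m + 1) - 1 = d by omega,
      show (d + 1 + 2 * m) * d = (d + 1) * d + m * d * 2 by ring, Nat.add_mul_div_right _ _ two_pos]
    rw [Nat.add_sub_cancel, Nat.add_sub_cancel, show (d + 1) * m = m * d + m by ring] at h
    omega

theorem schur_multiplier_le_niroomand_general (K : Type*) (L : Type*) [Field K] [LieRing L]
    [LieAlgebra K L] [FiniteDimensional K L] (h : LieRing.IsNilpotent L)
    (n m : ℕ) (hn : finrank K L = n)
    (hm : finrank K (LieSubmodule.toSubmodule ⁅(⊤ : LieIdeal K L), (⊤ : LieIdeal K L)⁆) = m)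
    (hm1 : 1 ≤ m) :
    schurRank K L ≤ (((n + m - 2) * (n - m - 1) / 2 + 1 : ℕ) : Cardinal) := by
  change finrank K (derivedSubmodule K L) = m at hm
  let π : FreeLieAlgebra K L →ₗ⁅K⁆ L := FreeLieAlgebra.lift K id
  have hπ : Function.Surjective π := fun a => ⟨FreeLieAlgebra.of K a, by simp [π]⟩
  obtain ⟨σ, hσ⟩ := π.toLinearMap.exists_rightInverse_of_surjective (LinearMap.range_eq_top.mpr hπ)
  have hπσ : ∀ a, π (σ a) = a := LinearMap.congr_fun hσ
  have hL : derivedSubmodule K L ≠ ⊥ := fun h0 => by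
    rw [h0, finrank_bot] at hm
    omega
  have lower : schurRank K L + m ≤ Module.rank K (SchurCover π) :=
    hm ▸ rank_schurMultiplier_add_finrank_derivedSubmodule_le hπ
  have upper := rank_le_of_cocycle schurCocycle_mem_twoCochain (schurCocycle_leibniz hπσ)
    (span_schurCocycle_eq_top hπσ) hL
  rw [hn, hm] at upper
  have hrm := lower.trans upper
  obtain ⟨r, hr⟩ :=
    Cardinal.lt_aleph0.mp ((le_self_add.trans hrm).trans_lt Cardinal.natCast_lt_aleph0)
  rw [hr] at hrm ⊢
  norm_cast at hrm ⊢
  exact niroomand_bound_of_le hm1 (hm ▸ hn ▸ Submodule.finrank_le _) hrm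

theorem schur_multiplier_le_niroomand (K : Type*) (L : Type*) [Field K] [LieRing L]
    [LieAlgebra K L] [FiniteDimensional K L] (h : LieRing.IsNilpotent L)
    (hna : ¬ IsLieAbelian L) (n m : ℕ) (hn : finrank K L = n)
    (hm : finrank K (LieSubmodule.toSubmodule ⁅(⊤ : LieIdeal K L), (⊤ : LieIdeal K L)⁆) = m)
    (hm1 : 1 ≤ m) :
    schurRank K L ≤ (((n + m - 2) * (n - m - 1) / 2 + 1 : ℕ) : Cardinal) :=
  schur_multiplier_le_niroomand_general K L h n m hn hm hm1
end

section
/- Let L be a finite-dimensional Lie algebra and K a central ideal of L. Then dim M(L) + dim(L² ∩ K) ≤ dim M(L/K) + dim M(K) + dim((L/K)^{ab} ⊗ K). -/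
open Module

universe u

/-!
Take the free presentation `R ↣ F ↠ L` and let `T` be the preimage of `K`, so that `F / T ≅ L / K`
and `T / R ≅ K`. By Hopf's formula `(T ∩ F²) / [F, R]` has dimension `dim M(L) + dim (L² ∩ K)`;
filter it by `[F, T] ⊇ [T, T] + [F, R] ⊇ [F, R]`. The top factor `(T ∩ F²) / [F, T]` is a quotient
of `M(L / K)`, Hopf's formula for the presentation `T ↣ F ↠ L / K`. As `K` is central,
`[F, T] ⊆ R`, so the bracket induces a surjection `(L / K)^ab ⊗ K → [F, T] / ([T, T] + [F, R])`.
As `K` is abelian, `([T, T] + [F, R]) / [F, R]` is a quotient of `M(K)`.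
-/

open TensorProduct

section Subquotient

variable {k : Type*} {M N : Type u} [Field k] [AddCommGroup M] [Module k M] [AddCommGroup N]
  [Module k N]

theorem rank_subquotient_add_rank_subquotient {A B C : Submodule k M} (hBC : B ≤ C)
    (hCA : C ≤ A) :
    Module.rank k (A ⧸ C.comap A.subtype) + Module.rank k (C ⧸ B.comap C.subtype)
      = Module.rank k (A ⧸ B.comap A.subtype) := by
  set W : Submodule k (A ⧸ B.comap A.subtype) := (C.comap A.subtype).map (B.comap A.subtype).mkQ
  let f : C →ₗ[k] A ⧸ B.comap A.subtype := (B.comap A.subtype).mkQ ∘ₗ Submodule.inclusion hCA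
  have hker : LinearMap.ker f = B.comap C.subtype := by
    ext x
    simp [f]
  have hrange : LinearMap.range f = W := by
    rw [LinearMap.range_comp, Submodule.range_inclusion]
  have eC : (C ⧸ B.comap C.subtype) ≃ₗ[k] W :=
    (Submodule.quotEquivOfEq _ _ hker.symm).trans
      (f.quotKerEquivRange.trans (LinearEquiv.ofEq _ _ hrange))
  have eA : ((A ⧸ B.comap A.subtype) ⧸ W) ≃ₗ[k] A ⧸ C.comap A.subtype :=
    Submodule.quotientQuotientEquivQuotient _ _ (Submodule.comap_mono hBC)
  rw [← eA.rank_eq, eC.rank_eq, Submodule.rank_quotient_add_rank]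

theorem rank_subquotient_eq_rank_map (f : M →ₗ[k] N) {A C : Submodule k M}
    (hC : A ⊓ C = A ⊓ LinearMap.ker f) :
    Module.rank k (A ⧸ C.comap A.subtype) = Module.rank k (A.map f) := by
  have hker : C.comap A.subtype = LinearMap.ker (f.domRestrict A) := by
    ext x
    simpa [x.2] using SetLike.ext_iff.mp hC (x : M)
  rw [hker, (f.domRestrict A).quotKerEquivRange.rank_eq, LinearMap.range_domRestrict]

theorem rank_subquotient_le_of_le_map_sup (f : M →ₗ[k] N) {A B : Submodule k M}
    {A' B' : Submodule k N} (hA : A ≤ A'.comap f) (hB : B ≤ B'.comap f)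
    (hA' : A' ≤ A.map f ⊔ B') :
    Module.rank k (A' ⧸ B'.comap A'.subtype) ≤ Module.rank k (A ⧸ B.comap A.subtype) := by
  refine LinearMap.rank_le_of_surjective
    (Submodule.mapQ _ _ (f.restrict hA) fun x hx => hB hx) ?_
  rintro ⟨y⟩
  obtain ⟨_, ⟨x, hx, rfl⟩, z, hz, hxz⟩ := Submodule.mem_sup.mp (hA' y.2)
  refine ⟨Submodule.Quotient.mk ⟨x, hx⟩, (Submodule.Quotient.eq _).mpr ?_⟩
  simpa [← hxz] using hz

theorem rank_map₂_le_rank_mul_rank {P : Type u} [AddCommGroup P] [Module k P]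
    (b : M →ₗ[k] N →ₗ[k] P) {M₀ : Submodule k M} {N₀ : Submodule k N}
    (hM : M₀ ≤ LinearMap.ker b) (hN : N₀ ≤ LinearMap.ker b.flip) :
    Module.rank k (Submodule.map₂ b ⊤ ⊤) ≤ Module.rank k (M ⧸ M₀) * Module.rank k (N ⧸ N₀) := by
  set b' := TensorProduct.lift (b.liftQ₂ M₀ N₀ hM hN)
  have hle : Submodule.map₂ b ⊤ ⊤ ≤ LinearMap.range b' :=
    Submodule.map₂_le.mpr fun m _ n _ =>
      ⟨Submodule.Quotient.mk m ⊗ₜ Submodule.Quotient.mk n, by simp [b']⟩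
  calc Module.rank k (Submodule.map₂ b ⊤ ⊤)
      ≤ Module.rank k (LinearMap.range b') := Submodule.rank_mono hle
    _ ≤ Module.rank k ((M ⧸ M₀) ⊗[k] (N ⧸ N₀)) := rank_range_le _
    _ = Module.rank k (M ⧸ M₀) * Module.rank k (N ⧸ N₀) := rank_tensorProduct'

end Subquotient

section LieIdealOperations

variable {k L L' M : Type*} [Field k] [LieRing L] [LieAlgebra k L] [LieRing L'] [LieAlgebra k L']
  [AddCommGroup M] [Module k M] [LieRingModule L M] [LieModule k L M]

theorem lieIdeal_oper_toSubmodule_le_iff {I : LieIdeal k L} {N : LieSubmodule k L M}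
    {P : Submodule k M} :
    LieSubmodule.toSubmodule ⁅I, N⁆ ≤ P ↔ ∀ x ∈ I, ∀ m ∈ N, ⁅x, m⁆ ∈ P := by
  rw [LieSubmodule.lieIdeal_oper_eq_linear_span', Submodule.span_le]
  constructor
  · exact fun h x hx m hm => h ⟨x, hx, m, hm, rfl⟩
  · rintro h _ ⟨x, hx, m, hm, rfl⟩
    exact h x hx m hm

theorem lie_sub_lie_mem_top_lie {J : LieIdeal k L} {a a' b b' : L} (ha : a - a' ∈ J)
    (hb : b - b' ∈ J) : ⁅a, b⁆ - ⁅a', b'⁆ ∈ ⁅(⊤ : LieIdeal k L), J⁆ := by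
  have h : ⁅a, b⁆ - ⁅a', b'⁆ = ⁅a', b - b'⁆ - ⁅b, a - a'⁆ := by
    rw [lie_sub, lie_sub, ← lie_skew b a, ← lie_skew b a']
    abel
  rw [h]
  exact sub_mem (LieSubmodule.lie_mem_lie (LieSubmodule.mem_top _) hb)
    (LieSubmodule.lie_mem_lie (LieSubmodule.mem_top _) ha)

theorem LieIdeal.lie_le_comap_lie (φ : L →ₗ⁅k⁆ L') {I J : LieIdeal k L}
    {I' J' : LieIdeal k L'} (hI : I ≤ I'.comap φ) (hJ : J ≤ J'.comap φ) :
    ⁅I, J⁆ ≤ ⁅I', J'⁆.comap φ :=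
  (LieSubmodule.mono_lie hI hJ).trans (LieIdeal.comap_bracket_le φ)

theorem LieIdeal.map_derived_eq {φ : L →ₗ⁅k⁆ L'} (hφ : Function.Surjective φ) :
    (LieSubmodule.toSubmodule ⁅(⊤ : LieIdeal k L), (⊤ : LieIdeal k L)⁆).map φ.toLinearMap
      = LieSubmodule.toSubmodule ⁅(⊤ : LieIdeal k L'), (⊤ : LieIdeal k L')⁆ := by
  rw [← LieIdeal.coe_map_of_surjective hφ, LieIdeal.map_bracket_eq φ hφ, ← φ.idealRange_eq_map,
    φ.idealRange_eq_top_of_surjective hφ]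

def LieIdeal.quotientMk (I : LieIdeal k L) : L →ₗ⁅k⁆ L ⧸ I :=
  { (LieSubmodule.toSubmodule I).mkQ with map_lie' := rfl }

theorem LieIdeal.ker_quotientMk_comp (I : LieIdeal k L) (φ : L' →ₗ⁅k⁆ L) :
    (I.quotientMk.comp φ).ker = I.comap φ := by
  ext x
  exact Submodule.Quotient.mk_eq_zero _

end LieIdealOperations

section LieSubquotient

variable {k : Type*} {F : Type u} [Field k] [LieRing F] [LieAlgebra k F]

abbrev LieIdeal.Subquotient (I J : LieIdeal k F) : Type u :=
  LieSubmodule.toSubmodule I ⧸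
    (LieSubmodule.toSubmodule J).comap (LieSubmodule.toSubmodule I).subtype

theorem LieIdeal.rank_subquotient_add {I J K : LieIdeal k F} (hJK : J ≤ K) (hKI : K ≤ I) :
    Module.rank k (I.Subquotient K) + Module.rank k (K.Subquotient J)
      = Module.rank k (I.Subquotient J) :=
  rank_subquotient_add_rank_subquotient hJK hKI

theorem rank_top_lie_subquotient_le_rank_mul_rank {R T : LieIdeal k F}
    (hTR : ⁅(⊤ : LieIdeal k F), T⁆ ≤ R) :
    Module.rank k (⁅(⊤ : LieIdeal k F), T⁆.Subquotient (⁅T, T⁆ ⊔ ⁅(⊤ : LieIdeal k F), R⁆))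
      ≤ Module.rank k (F ⧸ (LieSubmodule.toSubmodule T ⊔
          LieSubmodule.toSubmodule ⁅(⊤ : LieIdeal k F), (⊤ : LieIdeal k F)⁆))
        * Module.rank k (T.Subquotient R) := by
  set U := LieSubmodule.toSubmodule (⁅T, T⁆ ⊔ ⁅(⊤ : LieIdeal k F), R⁆)
  let b : F →ₗ[k] LieSubmodule.toSubmodule T →ₗ[k] F ⧸ U :=
    ((LieModule.toEnd k F F : F →ₗ[k] Module.End k F).compl₂
      (LieSubmodule.toSubmodule T).subtype).compr₂ U.mkQ
  have hb (x : F) (y : LieSubmodule.toSubmodule T) : b x y = U.mkQ ⁅x, (y : F)⁆ := rfl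
  have hU (x : F) {y : F} (hy : y ∈ R) : ⁅x, y⁆ ∈ U :=
    (le_sup_right : ⁅(⊤ : LieIdeal k F), R⁆ ≤ _)
      (LieSubmodule.lie_mem_lie (LieSubmodule.mem_top x) hy)
  have hT : LieSubmodule.toSubmodule T ≤ LinearMap.ker b := fun x hx =>
    LinearMap.ext fun y => by
      rw [hb, LinearMap.zero_apply, Submodule.mkQ_apply, Submodule.Quotient.mk_eq_zero]
      exact (le_sup_left : ⁅T, T⁆ ≤ _) (LieSubmodule.lie_mem_lie hx y.2)
  have hF2 : LieSubmodule.toSubmodule ⁅(⊤ : LieIdeal k F), (⊤ : LieIdeal k F)⁆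
      ≤ LinearMap.ker b :=
    lieIdeal_oper_toSubmodule_le_iff.mpr fun a _ c _ => LinearMap.ext fun y => by
      have hy (x : F) : ⁅x, (y : F)⁆ ∈ R :=
        hTR (LieSubmodule.lie_mem_lie (LieSubmodule.mem_top x) y.2)
      rw [hb, LinearMap.zero_apply, Submodule.mkQ_apply, Submodule.Quotient.mk_eq_zero, lie_lie]
      exact sub_mem (hU a (hy c)) (hU c (hy a))
  have hR : (LieSubmodule.toSubmodule R).comap (LieSubmodule.toSubmodule T).subtype
      ≤ LinearMap.ker b.flip := fun y hy => LinearMap.ext fun x => by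
    rw [LinearMap.flip_apply, hb, LinearMap.zero_apply, Submodule.mkQ_apply,
      Submodule.Quotient.mk_eq_zero]
    exact hU x hy
  have hmap : (LieSubmodule.toSubmodule ⁅(⊤ : LieIdeal k F), T⁆).map U.mkQ
      ≤ Submodule.map₂ b ⊤ ⊤ :=
    Submodule.map_le_iff_le_comap.mpr <| lieIdeal_oper_toSubmodule_le_iff.mpr fun x _ y hy =>
      Submodule.apply_mem_map₂ b (n := ⟨y, hy⟩) Submodule.mem_top Submodule.mem_top
  calc Module.rank k (⁅(⊤ : LieIdeal k F), T⁆.Subquotient (⁅T, T⁆ ⊔ ⁅(⊤ : LieIdeal k F), R⁆))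
      = Module.rank k ((LieSubmodule.toSubmodule ⁅(⊤ : LieIdeal k F), T⁆).map U.mkQ) :=
        rank_subquotient_eq_rank_map U.mkQ (by rw [Submodule.ker_mkQ])
    _ ≤ Module.rank k (Submodule.map₂ b ⊤ ⊤) := Submodule.rank_mono hmap
    _ ≤ _ := rank_map₂_le_rank_mul_rank b (sup_le hT hF2) hR

end LieSubquotient

section MultiplierRank

variable {k F L : Type u} [Field k] [LieRing F] [LieAlgebra k F] [LieRing L] [LieAlgebra k L]

noncomputable def multiplierRank (f : F →ₗ⁅k⁆ L) : Cardinal.{u} :=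
  Module.rank k ((f.ker ⊓ ⁅(⊤ : LieIdeal k F), (⊤ : LieIdeal k F)⁆).Subquotient
    ⁅(⊤ : LieIdeal k F), f.ker⁆)

theorem schurRank_eq_multiplierRank :
    schurRank k L = multiplierRank (FreeLieAlgebra.lift k (id : L → L)) :=
  rfl

theorem multiplierRank_le_of_comp_eq {F' : Type u} [LieRing F'] [LieAlgebra k F']
    {f : F →ₗ⁅k⁆ L} {f' : F' →ₗ⁅k⁆ L} (α : F' →ₗ⁅k⁆ F) (β : F →ₗ⁅k⁆ F')
    (hα : f.comp α = f') (hβ : f'.comp β = f) :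
    multiplierRank f ≤ multiplierRank f' := by
  have hα_ker : f'.ker ≤ f.ker.comap α := fun x hx => by
    simpa [← hα] using hx
  have hβ_ker : f.ker ≤ f'.ker.comap β := fun x hx => by
    simpa [← hβ] using hx
  have hαβ (x : F) : x - α (β x) ∈ f.ker := by
    rw [LieHom.mem_ker, map_sub, sub_eq_zero, ← LieHom.comp_apply f α, hα, ← LieHom.comp_apply,
      hβ]
  -- `α ∘ β` is the identity modulo `ker f`, hence modulo `⁅F, ker f⁆` on brackets.
  have hαβ_derived : LieSubmodule.toSubmodule ⁅(⊤ : LieIdeal k F), (⊤ : LieIdeal k F)⁆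
      ≤ (LieSubmodule.toSubmodule ⁅(⊤ : LieIdeal k F), f.ker⁆).comap
        (LinearMap.id - α.toLinearMap ∘ₗ β.toLinearMap) :=
    lieIdeal_oper_toSubmodule_le_iff.mpr fun a _ b _ => by
      simpa using lie_sub_lie_mem_top_lie (hαβ a) (hαβ b)
  apply rank_subquotient_le_of_le_map_sup α.toLinearMap
  · exact inf_le_inf hα_ker (LieIdeal.lie_le_comap_lie α le_top le_top)
  · exact LieIdeal.lie_le_comap_lie α le_top hα_ker
  · rintro x ⟨hx_ker, hx_derived⟩
    refine Submodule.mem_sup.mpr ⟨α (β x), ⟨β x, ⟨hβ_ker hx_ker, ?_⟩, rfl⟩, x - α (β x),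
      hαβ_derived hx_derived, add_sub_cancel _ _⟩
    exact LieIdeal.lie_le_comap_lie β le_top le_top hx_derived

theorem multiplierRank_le_schurRank {X : Type u} (μ : FreeLieAlgebra k X →ₗ⁅k⁆ L)
    (hμ : Function.Surjective μ) :
    multiplierRank μ ≤ schurRank k L :=
  multiplierRank_le_of_comp_eq (FreeLieAlgebra.lift k (Function.surjInv hμ))
    (FreeLieAlgebra.lift k fun x => FreeLieAlgebra.of k (μ (FreeLieAlgebra.of k x)))
    (FreeLieAlgebra.hom_ext fun y => by simp [Function.surjInv_eq])
    (FreeLieAlgebra.hom_ext fun x => by simp)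

end MultiplierRank

section Presentation

variable {k F L : Type u} [Field k] [LieRing F] [LieAlgebra k F] [LieRing L] [LieAlgebra k L]
  {π : F →ₗ⁅k⁆ L} (hπ : Function.Surjective π) (I : LieIdeal k L)

theorem lie_top_comap_le_ker_of_le_center (hI : I ≤ LieAlgebra.center k L) :
    ⁅(⊤ : LieIdeal k F), I.comap π⁆ ≤ π.ker :=
  (LieSubmodule.lie_le_iff _ _ _).mpr fun x _ t ht => by
    rw [LieHom.mem_ker, LieHom.map_lie]
    exact (LieModule.mem_maxTrivSubmodule k L L _).mp (hI ht) (π x)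

include hπ

theorem multiplierRank_add_rank_derived_inf :
    multiplierRank π + Module.rank k
        (LieSubmodule.toSubmodule (⁅(⊤ : LieIdeal k L), (⊤ : LieIdeal k L)⁆ ⊓ I))
      = Module.rank k ((I.comap π ⊓ ⁅(⊤ : LieIdeal k F), (⊤ : LieIdeal k F)⁆).Subquotient
          ⁅(⊤ : LieIdeal k F), π.ker⁆) := by
  set A : LieIdeal k F := I.comap π ⊓ ⁅(⊤ : LieIdeal k F), (⊤ : LieIdeal k F)⁆
  set C : LieIdeal k F := π.ker ⊓ ⁅(⊤ : LieIdeal k F), (⊤ : LieIdeal k F)⁆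
  have hCA : C ≤ A := inf_le_inf_right _ (π.ker_le_comap I)
  have hBC : ⁅(⊤ : LieIdeal k F), π.ker⁆ ≤ C :=
    le_inf (LieSubmodule.lie_le_right _ _) (LieSubmodule.mono_lie_right _ le_top)
  have hAC : LieSubmodule.toSubmodule A ⊓ LieSubmodule.toSubmodule C
      = LieSubmodule.toSubmodule A ⊓ LinearMap.ker π.toLinearMap := by
    ext x
    simp only [A, C, Submodule.mem_inf, LieSubmodule.mem_toSubmodule, LieSubmodule.mem_inf,
      LinearMap.mem_ker, LieHom.mem_ker, LieHom.coe_toLinearMap]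
    tauto
  have hmap : (LieSubmodule.toSubmodule A).map π.toLinearMap
      = LieSubmodule.toSubmodule (⁅(⊤ : LieIdeal k L), (⊤ : LieIdeal k L)⁆ ⊓ I) := by
    rw [LieSubmodule.inf_toSubmodule, LieSubmodule.inf_toSubmodule, LieIdeal.comap_toSubmodule,
      inf_comm (Submodule.comap _ _), ← Submodule.map_inf_eq_map_inf_comap,
      LieIdeal.map_derived_eq hπ]
  have h := rank_subquotient_add_rank_subquotient hBC hCA
  rwa [rank_subquotient_eq_rank_map π.toLinearMap hAC, hmap, add_comm] at h

theorem rank_lie_comap_sup_subquotient_le_schurRank [IsLieAbelian I] :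
    Module.rank k ((⁅I.comap π, I.comap π⁆ ⊔ ⁅(⊤ : LieIdeal k F), π.ker⁆).Subquotient
        ⁅(⊤ : LieIdeal k F), π.ker⁆)
      ≤ schurRank k I := by
  set s := Function.surjInv hπ
  set θ : FreeLieAlgebra k I →ₗ⁅k⁆ F := FreeLieAlgebra.lift k fun x => s x
  have hπθ : π.comp θ = I.incl.comp (FreeLieAlgebra.lift k id) :=
    FreeLieAlgebra.hom_ext fun x => by simp [θ, s, Function.surjInv_eq]
  have hπθ_apply (x) : π (θ x) = FreeLieAlgebra.lift k (id : I → I) x :=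
    DFunLike.congr_fun hπθ x
  have hθ_top : ⊤ ≤ (I.comap π).comap θ := fun x _ => by
    simp [hπθ_apply]
  have hθ_ker : (FreeLieAlgebra.lift k (id : I → I)).ker ≤ π.ker.comap θ := fun x hx => by
    rw [LieIdeal.mem_comap, LieHom.mem_ker, hπθ_apply, LieHom.mem_ker.mp hx,
      LieSubmodule.coe_zero]
  have hs (t : F) : t - s (π t) ∈ π.ker := by
    simp [s, Function.surjInv_eq]
  rw [schurRank_eq_multiplierRank]
  apply rank_subquotient_le_of_le_map_sup θ.toLinearMap
  · exact inf_le_right.trans ((LieIdeal.lie_le_comap_lie θ hθ_top hθ_top).trans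
      (LieIdeal.comap_mono le_sup_left))
  · exact LieIdeal.lie_le_comap_lie θ le_top hθ_ker
  · rw [LieSubmodule.sup_toSubmodule]
    refine sup_le (lieIdeal_oper_toSubmodule_le_iff.mpr fun t₁ ht₁ t₂ ht₂ => ?_) le_sup_right
    -- Modulo `⁅F, ker π⁆`, `⁅t₁, t₂⁆` is the image of the relation `⁅π t₁, π t₂⁆ = 0` of `I`.
    set g : FreeLieAlgebra k I :=
      ⁅FreeLieAlgebra.of k (⟨π t₁, ht₁⟩ : I), FreeLieAlgebra.of k (⟨π t₂, ht₂⟩ : I)⁆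
    have hg : g ∈ (FreeLieAlgebra.lift k (id : I → I)).ker ⊓ ⁅(⊤ : LieIdeal k _), ⊤⁆ :=
      ⟨LieHom.mem_ker.mpr <| by
        rw [LieHom.map_lie, FreeLieAlgebra.lift_of_apply, FreeLieAlgebra.lift_of_apply]
        exact trivial_lie_zero _ _ _ _,
      LieSubmodule.lie_mem_lie (LieSubmodule.mem_top _) (LieSubmodule.mem_top _)⟩
    have hθg : θ g = ⁅s (π t₁), s (π t₂)⁆ := by simp [g, θ]
    refine Submodule.mem_sup.mpr ⟨θ g, ⟨g, hg, rfl⟩, ⁅t₁, t₂⁆ - θ g, ?_, add_sub_cancel _ _⟩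
    exact hθg ▸ lie_sub_lie_mem_top_lie (hs t₁) (hs t₂)

theorem rank_quotient_ker_sup_derived :
    Module.rank k (F ⧸ (LieSubmodule.toSubmodule π.ker ⊔
        LieSubmodule.toSubmodule ⁅(⊤ : LieIdeal k F), (⊤ : LieIdeal k F)⁆))
      = Module.rank k (L ⧸ LieSubmodule.toSubmodule ⁅(⊤ : LieIdeal k L), (⊤ : LieIdeal k L)⁆) := by
  set c := (LieSubmodule.toSubmodule ⁅(⊤ : LieIdeal k L), (⊤ : LieIdeal k L)⁆).mkQ
    ∘ₗ π.toLinearMap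
  have hker : LinearMap.ker c = LieSubmodule.toSubmodule π.ker ⊔
      LieSubmodule.toSubmodule ⁅(⊤ : LieIdeal k F), (⊤ : LieIdeal k F)⁆ := by
    rw [LinearMap.ker_comp, Submodule.ker_mkQ, ← LieIdeal.map_derived_eq hπ,
      Submodule.comap_map_eq, sup_comm, LieHom.ker_toSubmodule]
  rw [← hker, (c.quotKerEquivOfSurjective ((Submodule.mkQ_surjective _).comp hπ)).rank_eq]

theorem rank_comap_subquotient_ker :
    Module.rank k ((I.comap π).Subquotient π.ker)
      = Module.rank k (LieSubmodule.toSubmodule I) := by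
  have h := rank_subquotient_eq_rank_map π.toLinearMap
    (A := LieSubmodule.toSubmodule (I.comap π)) (C := LieSubmodule.toSubmodule π.ker)
    (by rw [LieHom.ker_toSubmodule])
  rwa [LieIdeal.comap_toSubmodule, Submodule.map_comap_eq_of_surjective hπ] at h

end Presentation

theorem schur_multiplier_central_ideal_general (k : Type u) (L : Type u) [Field k] [LieRing L]
    [LieAlgebra k L]
    (I : LieIdeal k L) (hI : I ≤ LieAlgebra.center k L) :
    schurRank k L
      + Module.rank k (LieSubmodule.toSubmodule (⁅(⊤ : LieIdeal k L), (⊤ : LieIdeal k L)⁆ ⊓ I))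
    ≤ schurRank k (L ⧸ I) + schurRank k I
      + Module.rank k (TensorProduct k
          ((L ⧸ I) ⧸ LieSubmodule.toSubmodule
            ⁅(⊤ : LieIdeal k (L ⧸ I)), (⊤ : LieIdeal k (L ⧸ I))⁆)
          (LieSubmodule.toSubmodule I)) := by
  set π : FreeLieAlgebra k L →ₗ⁅k⁆ L := FreeLieAlgebra.lift k id
  have hπ : Function.Surjective π := fun x =>
    ⟨FreeLieAlgebra.of k x, FreeLieAlgebra.lift_of_apply _ _⟩
  have hμ : Function.Surjective (I.quotientMk.comp π) := (Submodule.mkQ_surjective _).comp hπ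
  have : IsLieAbelian I := LieAlgebra.abelian_of_le_center k L I hI
  have h_quotient := multiplierRank_le_schurRank _ hμ
  have h_ab := rank_quotient_ker_sup_derived hμ
  rw [multiplierRank, I.ker_quotientMk_comp] at h_quotient
  rw [I.ker_quotientMk_comp] at h_ab
  have hRT := LieSubmodule.mono_lie_right (⊤ : LieIdeal k (FreeLieAlgebra k L))
    (π.ker_le_comap I)
  have hTT := LieSubmodule.mono_lie_left (I.comap π) (le_top : I.comap π ≤ ⊤)
  rw [schurRank_eq_multiplierRank, multiplierRank_add_rank_derived_inf hπ,
    ← LieIdeal.rank_subquotient_add hRT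
      (le_inf (LieSubmodule.lie_le_right _ _) (LieSubmodule.mono_lie_right _ le_top)),
    ← LieIdeal.rank_subquotient_add le_sup_right (sup_le hTT hRT),
    rank_tensorProduct', ← h_ab, ← rank_comap_subquotient_ker hπ I]
  calc _ ≤ schurRank k (L ⧸ I) + (_ + schurRank k I) :=
        add_le_add h_quotient (add_le_add
          (rank_top_lie_subquotient_le_rank_mul_rank (lie_top_comap_le_ker_of_le_center I hI))
          (rank_lie_comap_sup_subquotient_le_schurRank hπ I))
    _ = _ := by ring

theorem schur_multiplier_central_ideal (k : Type u) (L : Type u) [Field k] [LieRing L]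
    [LieAlgebra k L] [FiniteDimensional k L]
    (I : LieIdeal k L) (hI : I ≤ LieAlgebra.center k L) :
    schurRank k L
      + Module.rank k (LieSubmodule.toSubmodule (⁅(⊤ : LieIdeal k L), (⊤ : LieIdeal k L)⁆ ⊓ I))
    ≤ schurRank k (L ⧸ I) + schurRank k I
      + Module.rank k (TensorProduct k
          ((L ⧸ I) ⧸ LieSubmodule.toSubmodule
            ⁅(⊤ : LieIdeal k (L ⧸ I)), (⊤ : LieIdeal k (L ⧸ I))⁆)
          (LieSubmodule.toSubmodule I)) :=
  schur_multiplier_central_ideal_general k L I hI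
end

section
/- Let L be a Lie algebra over a field. For all i ≥ 3 and all elements x₁, x₂, ..., x_{i+1} ∈ L, the following identity holds: [[x₁,...,x_i]_l, x_{i+1}] + [[x_{i+1}, [x₁,...,x_{i-1}]_l], x_i] + [[[x_i, x_{i+1}]_r, [x₁,...,x_{i-2}]_l], x_{i-1}] + [[[x_{i-1}, x_i, x_{i+1}]_r, [x₁,...,x_{i-3}]_l], x_{i-2}] + ... + [[x₂,...,x_{i+1}]_r, x₁] = 0, where the k-th term (for 3 ≤ k ≤ i+1) is [[[x_{i+3-k},...,x_{i+1}]_r, [x₁,...,x_{i+1-k}]_l], x_{i+2-k}]. -/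
/-!
Write `Lₙ = [x₁,…,xₙ]_l` and `R(j, m) = [x_j,…,x_{j+m-1}]_r`. The first `m` terms of the
sum telescope to `-[R(i+2-m, m), L_{i+1-m}]` for `1 ≤ m ≤ i`: passing from `m` to `m + 1` is
one instance of the Jacobi identity, since `L_{n+1} = [Lₙ, x_{n+1}]` and
`R(j, m+1) = [x_j, R(j+1, m)]`. For `m = i` this is `-[R(2, i), x₁]`, which the last term
`[R(2, i), x₁]` cancels.
-/

open Module

variable {L : Type*}

/-- Left-normed bracket `[x₁,...,xᵢ]_l = [...[[x₁,x₂],x₃],...,xᵢ]` (zero for the empty list). -/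
def bracketL [LieRing L] : List L → L
  | [] => 0
  | a :: t => t.foldl (fun y z => ⁅y, z⁆) a

/-- Right-normed bracket `[x₁,...,xᵢ]_r = [x₁,[x₂,[...,[xᵢ₋₁,xᵢ]...]]]` (zero for the empty list). -/
def bracketR [LieRing L] : List L → L
  | [] => 0
  | [a] => a
  | a :: b :: t => ⁅a, bracketR (b :: t)⁆

open Finset

variable [LieRing L]

theorem bracketL_append_singleton {l : List L} (hl : l ≠ []) (z : L) :
    bracketL (l ++ [z]) = ⁅bracketL l, z⁆ := by
  cases l with
  | nil => contradiction
  | cons a t => simp [bracketL, List.foldl_append]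

theorem bracketR_cons_of_ne_nil (a : L) {l : List L} (hl : l ≠ []) :
    bracketR (a :: l) = ⁅a, bracketR l⁆ := by
  cases l with
  | nil => contradiction
  | cons b t => rfl

/-- `[x₁,…,xₙ]_l` -/
def bracketLSeq (x : ℕ → L) (n : ℕ) : L :=
  bracketL ((List.range' 1 n).map x)

/-- `[x_j,…,x_{j+m-1}]_r` -/
def bracketRSeq (x : ℕ → L) (j m : ℕ) : L :=
  bracketR ((List.range' j m).map x)

theorem lie_lie_sub_lie_lie (a b c : L) :
    ⁅⁅a, b⁆, c⁆ - ⁅a, ⁅b, c⁆⁆ = -⁅⁅c, a⁆, b⁆ := by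
  rw [lie_lie a b c, ← lie_skew ⁅c, a⁆ b, ← lie_skew c a, lie_neg]
  abel

variable (x : ℕ → L)

theorem bracketLSeq_succ {n : ℕ} (hn : n ≠ 0) :
    bracketLSeq x (n + 1) = ⁅bracketLSeq x n, x (n + 1)⁆ := by
  have hne : (List.range' 1 n).map x ≠ [] := by simpa using hn
  rw [bracketLSeq, List.range'_concat, List.map_append, List.map_singleton,
    bracketL_append_singleton hne, one_mul, add_comm 1 n, bracketLSeq]

theorem bracketRSeq_succ (j : ℕ) {m : ℕ} (hm : m ≠ 0) :
    bracketRSeq x j (m + 1) = ⁅x j, bracketRSeq x (j + 1) m⁆ := by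
  have hne : (List.range' (j + 1) m).map x ≠ [] := by simpa using hm
  rw [bracketRSeq, List.range'_succ, List.map_cons, bracketR_cons_of_ne_nil _ hne, bracketRSeq]

/-- Literally the summand of `jacobi_type_identity`, so that its sum can be folded by `change`. -/
def jacobiTerm (i k : ℕ) : L :=
  if k = 1 then ⁅bracketL ((List.range' 1 i).map x), x (i + 1)⁆
  else
    ⁅(let r := bracketR ((List.range' (i + 3 - k) (k - 1)).map x)
      let l := (List.range' 1 (i + 1 - k)).map x
      if l.isEmpty then r else ⁅r, bracketL l⁆), x (i + 2 - k)⁆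

theorem jacobiTerm_one (i : ℕ) : jacobiTerm x i 1 = ⁅bracketLSeq x i, x (i + 1)⁆ := rfl

theorem jacobiTerm_succ {m : ℕ} (hm : m ≠ 0) (n : ℕ) :
    jacobiTerm x (m + 1 + n) (m + 1) =
      ⁅⁅bracketRSeq x (n + 3) m, bracketLSeq x (n + 1)⁆, x (n + 2)⁆ := by
  have hne : ((List.range' 1 (n + 1)).map x).isEmpty = false := by simp
  simp only [jacobiTerm, if_neg (by omega : m + 1 ≠ 1),
    show m + 1 + n + 3 - (m + 1) = n + 3 by omega, show m + 1 + n + 1 - (m + 1) = n + 1 by omega,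
    show m + 1 + n + 2 - (m + 1) = n + 2 by omega, Nat.add_sub_cancel, hne,
    Bool.false_eq_true, if_false]
  rfl

theorem jacobiTerm_last {i : ℕ} (hi : i ≠ 0) :
    jacobiTerm x i (i + 1) = ⁅bracketRSeq x 2 i, x 1⁆ := by
  simp only [jacobiTerm, if_neg (by omega : i + 1 ≠ 1), show i + 3 - (i + 1) = 2 by omega,
    Nat.add_sub_cancel, Nat.sub_self, show i + 2 - (i + 1) = 1 by omega, List.range'_zero,
    List.map_nil, List.isEmpty_nil, if_true]
  rfl

theorem sum_jacobiTerm_Icc {m : ℕ} (hm : m ≠ 0) (n : ℕ) :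
    ∑ k ∈ Icc 1 m, jacobiTerm x (m + n) k =
      -⁅bracketRSeq x (n + 2) m, bracketLSeq x (n + 1)⁆ := by
  induction m, Nat.one_le_iff_ne_zero.mpr hm using Nat.le_induction generalizing n with
  | base =>
    rw [Icc_self, sum_singleton, add_comm, jacobiTerm_one, ← lie_skew]
    rfl
  | succ m hm ih =>
    have hm0 : m ≠ 0 := by omega
    rw [sum_Icc_succ_top (by omega), show m + 1 + n = m + (n + 1) by omega, ih hm0 (n + 1),
      ← show m + 1 + n = m + (n + 1) by omega, jacobiTerm_succ x hm0,
      bracketLSeq_succ x (by omega : n + 1 ≠ 0), bracketRSeq_succ x _ hm0, neg_add_eq_sub]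
    exact lie_lie_sub_lie_lie _ _ _

theorem jacobi_type_identity_general (L : Type*) [LieRing L]
    (i : ℕ) (x : ℕ → L) :
    (∑ k ∈ Finset.Icc 1 (i + 1),
      if k = 1 then ⁅bracketL ((List.range' 1 i).map x), x (i + 1)⁆
      else
        ⁅(let r := bracketR ((List.range' (i + 3 - k) (k - 1)).map x)
          let l := (List.range' 1 (i + 1 - k)).map x
          if l.isEmpty then r else ⁅r, bracketL l⁆), x (i + 2 - k)⁆) = 0 := by
  change ∑ k ∈ Icc 1 (i + 1), jacobiTerm x i k = 0
  rcases eq_or_ne i 0 with rfl | hi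
  · simp [jacobiTerm, bracketL]
  have hpartial := sum_jacobiTerm_Icc x hi 0
  rw [add_zero, zero_add, zero_add] at hpartial
  rw [sum_Icc_succ_top (by omega), hpartial, jacobiTerm_last x hi]
  exact neg_add_cancel _

theorem jacobi_type_identity (K : Type*) (L : Type*) [Field K] [LieRing L] [LieAlgebra K L]
    (i : ℕ) (hi : 3 ≤ i) (x : ℕ → L) :
    (∑ k ∈ Finset.Icc 1 (i + 1),
      if k = 1 then ⁅bracketL ((List.range' 1 i).map x), x (i + 1)⁆
      else
        ⁅(let r := bracketR ((List.range' (i + 3 - k) (k - 1)).map x)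
          let l := (List.range' 1 (i + 1 - k)).map x
          if l.isEmpty then r else ⁅r, bracketL l⁆), x (i + 2 - k)⁆) = 0 :=
  jacobi_type_identity_general L i x
end

section
/- Let L be the 4-dimensional Lie algebra L(3,4,1,4) over a field of characteristic ≠ 2, with basis x₁, x₂, x₃, x₄ and nonzero brackets [x₁,x₂] = x₃, [x₁,x₃] = x₄. Then dim M(L) = 2; in particular the bound dim M(L) ≤ n/2 for even n is attained. -/
open Module

/-! Modulo `[F, R]` a bracket `⁅f, g⁆` in `F` depends only on the images of `f` and `g` in `L`, so
modulo `[F, R]` the ideal `[F, F]` is spanned by the brackets of the generators `e i = of (b i)`.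
The defining relations put `⁅e 1, e 3⁆` and `⁅e 2, e 3⁆` into `[F, R]`, and `⁅e 0, e 1⁆`,
`⁅e 0, e 2⁆` map to the independent `b 2`, `b 3`; hence `R ∩ [F, F]` is spanned modulo `[F, R]`
by `⁅e 0, e 3⁆` and `⁅e 1, e 2⁆`. These two are independent modulo `[F, R]`: lifting `F` into a
central extension of `L` by `K²` gives a linear map on `F` that kills `[F, R]` and sends them to
the standard basis of `K²`. -/

open FreeLieAlgebra LieModule.Cohomology LieAlgebra

section LieHom

variable {R F L : Type*} [CommRing R] [LieRing F] [LieAlgebra R F] [LieRing L] [LieAlgebra R L]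
  (φ : F →ₗ⁅R⁆ L)

lemma lie_mem_lie_top_ker_of_map_eq_zero_right {r : F} (hr : φ r = 0) (f : F) :
    ⁅f, r⁆ ∈ ⁅(⊤ : LieIdeal R F), φ.ker⁆ :=
  LieSubmodule.lie_mem_lie (LieSubmodule.mem_top f) (φ.mem_ker.mpr hr)

lemma lie_mem_lie_top_ker_of_map_eq_zero_left {r : F} (hr : φ r = 0) (f : F) :
    ⁅r, f⁆ ∈ ⁅(⊤ : LieIdeal R F), φ.ker⁆ := by
  rw [← lie_skew]
  exact neg_mem (lie_mem_lie_top_ker_of_map_eq_zero_right φ hr f)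

lemma lie_mem_iff_of_map_eq {N : Submodule R F}
    (hN : LieSubmodule.toSubmodule ⁅(⊤ : LieIdeal R F), φ.ker⁆ ≤ N) {f f' g g' : F}
    (hf : φ f = φ f') (hg : φ g = φ g') : ⁅f, g⁆ ∈ N ↔ ⁅f', g'⁆ ∈ N := by
  have hdiff : ⁅f, g⁆ - ⁅f', g'⁆ ∈ N := by
    have hsplit : ⁅f, g⁆ - ⁅f', g'⁆ = ⁅f, g - g'⁆ + ⁅f - f', g'⁆ := by
      simp only [lie_sub, sub_lie]; abel
    rw [hsplit]
    refine add_mem (hN ?_) (hN ?_)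
    · exact lie_mem_lie_top_ker_of_map_eq_zero_right φ (by rw [map_sub, hg, sub_self]) f
    · exact lie_mem_lie_top_ker_of_map_eq_zero_left φ (by rw [map_sub, hf, sub_self]) g'
  exact ⟨fun h => by simpa using sub_mem h hdiff, fun h => by simpa using add_mem hdiff h⟩

lemma lie_mem_ker_inf_lie_top_top {f g : F} (h : φ ⁅f, g⁆ = 0) :
    ⁅f, g⁆ ∈ φ.ker ⊓ ⁅(⊤ : LieIdeal R F), ⊤⁆ :=
  ⟨φ.mem_ker.mpr h, LieSubmodule.lie_mem_lie (LieSubmodule.mem_top f) (LieSubmodule.mem_top g)⟩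

lemma lie_top_ker_le_ker_of_lie_eq {M : Type*} [AddCommGroup M] [Module R M] (θ : F →ₗ[R] M)
    (β : L →ₗ[R] L →ₗ[R] M) (h : ∀ f g, θ ⁅f, g⁆ = β (φ f) (φ g)) :
    LieSubmodule.toSubmodule ⁅(⊤ : LieIdeal R F), φ.ker⁆ ≤ LinearMap.ker θ := by
  rw [LieSubmodule.lieIdeal_oper_eq_linear_span', Submodule.span_le]
  rintro _ ⟨f, -, r, hr, rfl⟩
  simp [h, φ.mem_ker.mp hr]

end LieHom

section Cocycle

variable {K X L M : Type*} [CommRing K] [LieRing L] [LieAlgebra K L] [AddCommGroup M] [Module K M]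
  [LieRingModule L M] [LieModule K L M] [LieModule.IsTrivial L M]

lemma exists_linearMap_lie_eq_twoCocycle (c : twoCocycle K L M) (φ : X → L) :
    ∃ θ : FreeLieAlgebra K X →ₗ[K] M,
      ∀ f g, θ ⁅f, g⁆ = (c : twoCochain K L M) (lift K φ f) (lift K φ g) := by
  let τ : FreeLieAlgebra K X →ₗ⁅K⁆ ofTwoCocycle c := lift K fun x => ofProd c (φ x, 0)
  let proj : ofTwoCocycle c →ₗ⁅K⁆ L :=
    { toFun x := ((ofProd c).symm x).1
      map_add' _ _ := rfl
      map_smul' _ _ := rfl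
      map_lie' := rfl }
  have hτ : proj.comp τ = lift K φ := hom_ext fun x => by simp [τ]; rfl
  let θ : FreeLieAlgebra K X →ₗ[K] M :=
    { toFun f := ((ofProd c).symm (τ f)).2
      map_add' f g := by rw [map_add]; rfl
      map_smul' t f := by rw [map_smul]; rfl }
  refine ⟨θ, fun f g => ?_⟩
  have h1 : ∀ f, ((ofProd c).symm (τ f)).1 = lift K φ f := fun f => LieHom.congr_fun hτ f
  show ((ofProd c).symm (τ ⁅f, g⁆)).2 = _
  rw [LieHom.map_lie, bracket_ofTwoCocycle]
  simp [h1, trivial_lie_zero]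

end Cocycle

lemma rank_quotient_eq_two {K M : Type*} [CommRing K] [Nontrivial K] [AddCommGroup M] [Module K M]
    {A B : Submodule K M} {v w : M} (hv : v ∈ A) (hw : w ∈ A) (hA : A ≤ B ⊔ Submodule.span K {v, w})
    (g : M →ₗ[K] K × K) (hB : B ≤ LinearMap.ker g) (hgv : g v = (1, 0)) (hgw : g w = (0, 1)) :
    Module.rank K (A ⧸ B.comap A.subtype) = 2 := by
  let Φ := (B.comap A.subtype).liftQ (g ∘ₗ A.subtype) fun x hx => hB hx
  have hg : ∀ s t : K, g (s • v + t • w) = (s, t) := fun s t => by simp [hgv, hgw]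
  have hsurj : Function.Surjective Φ := fun ⟨s, t⟩ =>
    ⟨Submodule.Quotient.mk ⟨s • v + t • w, add_mem (A.smul_mem s hv) (A.smul_mem t hw)⟩, hg s t⟩
  have hinj : Function.Injective Φ := by
    rw [← LinearMap.ker_eq_bot, Submodule.eq_bot_iff]
    intro x hx
    obtain ⟨⟨a, ha⟩, rfl⟩ := Submodule.Quotient.mk_surjective _ x
    obtain ⟨p, hp, q, hq, rfl⟩ := Submodule.mem_sup.mp (hA ha)
    obtain ⟨s, t, rfl⟩ := Submodule.mem_span_pair.mp hq
    have hst : g (p + (s • v + t • w)) = 0 := hx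
    rw [map_add, LinearMap.mem_ker.mp (hB hp), zero_add, hg] at hst
    obtain ⟨rfl, rfl⟩ := Prod.mk_eq_zero.mp hst
    exact (Submodule.Quotient.mk_eq_zero _).mpr (by simpa using hp)
  have h := (LinearEquiv.ofBijective Φ ⟨hinj, hsurj⟩).lift_rank_eq
  rwa [rank_prod', rank_self, one_add_one_eq_two, Cardinal.lift_ofNat,
    Cardinal.lift_eq_ofNat_iff] at h

structure IsL3414Basis {K L : Type*} [CommRing K] [LieRing L] [LieAlgebra K L]
    (b : Basis (Fin 4) K L) : Prop where
  lie_zero_one : ⁅b 0, b 1⁆ = b 2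
  lie_zero_two : ⁅b 0, b 2⁆ = b 3
  lie_zero_three : ⁅b 0, b 3⁆ = 0
  lie_one_two : ⁅b 1, b 2⁆ = 0
  lie_one_three : ⁅b 1, b 3⁆ = 0
  lie_two_three : ⁅b 2, b 3⁆ = 0

namespace IsL3414Basis

variable {K L : Type*} [CommRing K] [LieRing L] [LieAlgebra K L] {b : Basis (Fin 4) K L}

lemma lie_eq (hb : IsL3414Basis b) (x y : L) :
    ⁅x, y⁆ = (b.repr x 0 * b.repr y 1 - b.repr x 1 * b.repr y 0) • b 2
      + (b.repr x 0 * b.repr y 2 - b.repr x 2 * b.repr y 0) • b 3 := by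
  have skew {u v w : L} (h : ⁅u, v⁆ = w) : ⁅v, u⁆ = -w := by rw [← lie_skew, h]
  conv_lhs => rw [← b.sum_repr x, ← b.sum_repr y]
  simp only [Fin.sum_univ_four, add_lie, lie_add, smul_lie, lie_smul, lie_self, hb.lie_zero_one,
    hb.lie_zero_two, hb.lie_zero_three, hb.lie_one_two, hb.lie_one_three, hb.lie_two_three,
    skew hb.lie_zero_one, skew hb.lie_zero_two, skew hb.lie_zero_three, skew hb.lie_one_two,
    skew hb.lie_one_three, skew hb.lie_two_three, smul_zero, smul_neg, neg_zero, smul_smul,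
    add_zero, zero_add]
  module

/-- Adjoining central elements `z₁ = ⁅b 0, b 3⁆` and `z₂ = ⁅b 1, b 2⁆` gives the Schur cover. -/
noncomputable def schurCocycle (hb : IsL3414Basis b) :
    twoCocycle K L (TrivialLieModule K L (K × K)) where
  val := ⟨(LinearMap.mk₂ K (fun x y => (b.repr x 0 * b.repr y 3 - b.repr x 3 * b.repr y 0,
        b.repr x 1 * b.repr y 2 - b.repr x 2 * b.repr y 1))
      (fun _ _ _ => by ext <;> simp <;> ring) (fun _ _ _ => by ext <;> simp <;> ring)
      (fun _ _ _ => by ext <;> simp <;> ring) (fun _ _ _ => by ext <;> simp <;> ring)).compr₂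
      (TrivialLieModule.equiv K L (K × K)).symm.toLinearMap,
    fun x => by simp only [LinearMap.compr₂_apply, LinearMap.mk₂_apply, mul_comm, sub_self]; rfl⟩
  property := by
    rw [mem_twoCocycle_iff_of_trivial]
    intro x y z
    change (TrivialLieModule.equiv K L (K × K)).symm _ =
      (TrivialLieModule.equiv K L (K × K)).symm _ + (TrivialLieModule.equiv K L (K × K)).symm _
    rw [← map_add]
    congr 1
    simp only [LinearMap.mk₂_apply, hb.lie_eq, map_add, map_smul, b.repr_self]
    ext <;> simp <;> ring

lemma schurCocycle_apply (hb : IsL3414Basis b) (x y : L) :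
    TrivialLieModule.equiv K L (K × K) ((hb.schurCocycle : twoCochain K L _) x y) =
      (b.repr x 0 * b.repr y 3 - b.repr x 3 * b.repr y 0,
        b.repr x 1 * b.repr y 2 - b.repr x 2 * b.repr y 1) :=
  rfl

lemma lie_one_zero (hb : IsL3414Basis b) : ⁅b 1, b 0⁆ = -b 2 := by
  rw [← lie_skew, hb.lie_zero_one]

-- In the presentation `0 → R → F → L → 0`: `𝓐 = R ∩ [F, F]` and `𝓑 = [F, R]`.
local notation "π" => FreeLieAlgebra.lift K (id : L → L)
local notation "e" i:max => FreeLieAlgebra.of K (b i)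
local notation "𝓐" => LieSubmodule.toSubmodule
  (LieHom.ker (FreeLieAlgebra.lift K (id : L → L)) ⊓ ⁅(⊤ : LieIdeal K (FreeLieAlgebra K L)), ⊤⁆)
local notation "𝓑" => LieSubmodule.toSubmodule
  ⁅(⊤ : LieIdeal K (FreeLieAlgebra K L)), LieHom.ker (FreeLieAlgebra.lift K (id : L → L))⁆
local notation "𝓥" => Submodule.span K
  {⁅FreeLieAlgebra.of K (b 0), FreeLieAlgebra.of K (b 3)⁆,
    ⁅FreeLieAlgebra.of K (b 1), FreeLieAlgebra.of K (b 2)⁆}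
local notation "𝓦" => Submodule.span K
  {⁅FreeLieAlgebra.of K (b 0), FreeLieAlgebra.of K (b 1)⁆,
    ⁅FreeLieAlgebra.of K (b 0), FreeLieAlgebra.of K (b 2)⁆}

lemma lie_of_one_of_three_mem (hb : IsL3414Basis b) : ⁅e 1, e 3⁆ ∈ 𝓑 := by
  rw [lie_mem_iff_of_map_eq π le_rfl rfl (by simp [hb.lie_zero_two] : π (e 3) = π ⁅e 0, e 2⁆),
    leibniz_lie]
  refine add_mem ?_ (lie_mem_lie_top_ker_of_map_eq_zero_right π (by simp [hb.lie_one_two]) _)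
  rw [lie_mem_iff_of_map_eq π le_rfl (by simp [hb.lie_one_zero] :
    π ⁅e 1, e 0⁆ = π (-e 2)) rfl, neg_lie, lie_self, neg_zero]
  exact zero_mem _

lemma lie_of_two_of_three_mem (hb : IsL3414Basis b) : ⁅e 2, e 3⁆ ∈ 𝓑 := by
  rw [lie_mem_iff_of_map_eq π le_rfl (by simp [hb.lie_zero_one] : π (e 2) = π ⁅e 0, e 1⁆) rfl,
    lie_lie]
  exact sub_mem (lie_mem_lie_top_ker_of_map_eq_zero_right π (by simp [hb.lie_one_three]) _)
    (lie_mem_lie_top_ker_of_map_eq_zero_right π (by simp [hb.lie_zero_three]) _)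

lemma lie_of_of_mem_sup (hb : IsL3414Basis b) (i j : Fin 4) : ⁅e i, e j⁆ ∈ 𝓑 ⊔ 𝓥 ⊔ 𝓦 := by
  wlog hij : i ≤ j generalizing i j
  · rw [← lie_skew (e i) (e j)]
    exact neg_mem (this j i (le_of_not_ge hij))
  have hB : 𝓑 ≤ 𝓑 ⊔ 𝓥 ⊔ 𝓦 := le_sup_left.trans le_sup_left
  have hV : 𝓥 ≤ 𝓑 ⊔ 𝓥 ⊔ 𝓦 := le_sup_right.trans le_sup_left
  have hW : 𝓦 ≤ 𝓑 ⊔ 𝓥 ⊔ 𝓦 := le_sup_right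
  fin_cases i <;> fin_cases j <;>
    simp only [Fin.reduceFinMk, Fin.isValue, Fin.reduceLE, lie_self, zero_mem] at hij ⊢
  · exact hW (Submodule.subset_span (by simp))
  · exact hW (Submodule.subset_span (by simp))
  · exact hV (Submodule.subset_span (by simp))
  · exact hV (Submodule.subset_span (by simp))
  · exact hB hb.lie_of_one_of_three_mem
  · exact hB hb.lie_of_two_of_three_mem

lemma lie_mem_sup (hb : IsL3414Basis b) (f g : FreeLieAlgebra K L) : ⁅f, g⁆ ∈ 𝓑 ⊔ 𝓥 ⊔ 𝓦 := by
  let s : L →ₗ[K] FreeLieAlgebra K L := b.constr K fun i => e i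
  have hs (x : L) : π (s x) = x :=
    LinearMap.congr_fun (b.ext (f₁ := (π).toLinearMap ∘ₗ s) (f₂ := LinearMap.id)
      fun i => by simp [s]) x
  rw [lie_mem_iff_of_map_eq π (le_sup_left.trans le_sup_left) (hs (π f)).symm (hs (π g)).symm]
  simp only [s, Basis.constr_apply_fintype K, sum_lie, lie_sum, smul_lie, lie_smul]
  exact sum_mem fun j _ => Submodule.smul_mem _ _ <| sum_mem fun i _ =>
    Submodule.smul_mem _ _ (lie_of_of_mem_sup hb i j)

lemma ker_inf_lie_top_top_le (hb : IsL3414Basis b) : 𝓐 ≤ 𝓑 ⊔ 𝓥 := by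
  intro a ha
  rw [LieSubmodule.mem_toSubmodule, LieSubmodule.mem_inf] at ha
  obtain ⟨haR, haF⟩ := ha
  have haN : a ∈ 𝓑 ⊔ 𝓥 ⊔ 𝓦 := by
    rw [← LieSubmodule.mem_toSubmodule, LieSubmodule.lieIdeal_oper_eq_linear_span'] at haF
    refine Submodule.span_le.mpr ?_ haF
    rintro _ ⟨f, -, g, -, rfl⟩
    exact lie_mem_sup hb f g
  obtain ⟨n, hn, t, ht, rfl⟩ := Submodule.mem_sup.mp haN
  obtain ⟨α, β, rfl⟩ := Submodule.mem_span_pair.mp ht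
  have hn0 : π n = 0 := by
    have hle : 𝓑 ⊔ 𝓥 ≤ LieSubmodule.toSubmodule (LieHom.ker π) := by
      refine sup_le (LieSubmodule.lie_le_right _ _) (Submodule.span_le.mpr ?_)
      simp [Set.insert_subset_iff, hb.lie_zero_three, hb.lie_one_two]
    exact (π).mem_ker.mp (hle hn)
  have h23 : α • b 2 + β • b 3 = 0 := by
    simpa [hn0, hb.lie_zero_one, hb.lie_zero_two] using (π).mem_ker.mp haR
  obtain ⟨rfl, rfl⟩ := (LinearIndepOn.pair_iff b (by decide)).mp
    (b.linearIndependent.linearIndepOn _) α β h23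
  simpa using hn

end IsL3414Basis

lemma IsL3414Basis.schurRank_eq_two {K L : Type*} [Field K] [LieRing L] [LieAlgebra K L]
    {b : Basis (Fin 4) K L} (hb : IsL3414Basis b) : schurRank K L = 2 := by
  obtain ⟨θ, hθ⟩ := exists_linearMap_lie_eq_twoCocycle hb.schurCocycle id
  refine rank_quotient_eq_two
    (lie_mem_ker_inf_lie_top_top _ (by simp [hb.lie_zero_three]))
    (lie_mem_ker_inf_lie_top_top _ (by simp [hb.lie_one_two])) hb.ker_inf_lie_top_top_le
    ((TrivialLieModule.equiv K L (K × K)).toLinearMap ∘ₗ θ) ?_ ?_ ?_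
  · exact (lie_top_ker_le_ker_of_lie_eq _ θ _ hθ).trans (LinearMap.ker_le_ker_comp _ _)
  · simp [hθ, schurCocycle_apply]
  · simp [hθ, schurCocycle_apply]

theorem schur_multiplier_L3414_general (K : Type*) (L : Type*) [Field K] [LieRing L] [LieAlgebra K L]
    (b : Basis (Fin 4) K L)
    (h12 : ⁅b 0, b 1⁆ = b 2) (h13 : ⁅b 0, b 2⁆ = b 3)
    (h14 : ⁅b 0, b 3⁆ = 0) (h23 : ⁅b 1, b 2⁆ = 0) (h24 : ⁅b 1, b 3⁆ = 0)
    (h34 : ⁅b 2, b 3⁆ = 0) :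
    schurRank K L = 2 ∧ finrank K L / 2 = 2 :=
  ⟨IsL3414Basis.schurRank_eq_two ⟨h12, h13, h14, h23, h24, h34⟩, by simp [finrank_eq_card_basis b]⟩

theorem schur_multiplier_L3414 (K : Type*) (L : Type*) [Field K] [LieRing L] [LieAlgebra K L]
    (hchar : ringChar K ≠ 2) (b : Basis (Fin 4) K L)
    (h12 : ⁅b 0, b 1⁆ = b 2) (h13 : ⁅b 0, b 2⁆ = b 3)
    (h14 : ⁅b 0, b 3⁆ = 0) (h23 : ⁅b 1, b 2⁆ = 0) (h24 : ⁅b 1, b 3⁆ = 0)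
    (h34 : ⁅b 2, b 3⁆ = 0) :
    schurRank K L = 2 ∧ finrank K L / 2 = 2 :=
  schur_multiplier_L3414_general K L b h12 h13 h14 h23 h24 h34
end

section
/- Let L be the 5-dimensional Lie algebra L(7,5,1,7) over a field of characteristic ≠ 2, with basis x₁,...,x₅ and nonzero brackets [x₁,x₂] = x₃, [x₁,x₃] = x₄, [x₁,x₄] = x₅. Then dim M(L) = 3; in particular the bound dim M(L) ≤ (n+1)/2 for odd n is attained. -/
open Module

/-!
By Hopf's formula `M(L) = (R ∩ [F,F]) / [F,R]`. Fix a linear section `σ` of `F → L`. Modulo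
`[F,R]` every element of `[F,F]` is a combination of lifted brackets `⁅σ x, σ y⁆` of basis
vectors, and these satisfy the Jacobi identity with `σ ⁅y,z⁆` in place of `⁅σ y, σ z⁆`. For the
model filiform algebra the Jacobi relations together with the condition of lying in `R` leave
only the classes of `⁅x₁,x₅⁆`, `⁅x₂,x₃⁆`, `⁅x₂,x₅⁆`. Conversely, a 2-cocycle `ω` with trivial
coefficients gives a functional on `M(L)`: lift `F` into the central extension of `L` by `ω`,
which kills `[F,R]` because `R` lands in the centre. Three explicit cocycles are dual to the three
classes, so these form a basis of `M(L)`.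
-/

open Submodule LieAlgebra LieModule.Cohomology

theorem lie_swap {L : Type*} [LieRing L] {x y v : L} (h : ⁅x, y⁆ = v) : ⁅y, x⁆ = -v := by
  rw [← lie_skew, h]

section Hopf

variable (R : Type*) (L : Type*) [CommRing R] [LieRing L] [LieAlgebra R L]

noncomputable abbrev freeProj : FreeLieAlgebra R L →ₗ⁅R⁆ L := FreeLieAlgebra.lift R id

noncomputable abbrev relIdeal : LieIdeal R (FreeLieAlgebra R L) := (freeProj R L).ker

noncomputable abbrev hopfNumerator : Submodule R (FreeLieAlgebra R L) :=
  LieSubmodule.toSubmodule (relIdeal R L ⊓ ⁅(⊤ : LieIdeal R (FreeLieAlgebra R L)), ⊤⁆)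

noncomputable abbrev hopfDenominator : Submodule R (FreeLieAlgebra R L) :=
  LieSubmodule.toSubmodule ⁅(⊤ : LieIdeal R (FreeLieAlgebra R L)), relIdeal R L⁆

abbrev HopfQuotient : Type _ :=
  hopfNumerator R L ⧸ (hopfDenominator R L).comap (hopfNumerator R L).subtype

variable {R L}

@[simp]
theorem freeProj_of (x : L) : freeProj R L (FreeLieAlgebra.of R x) = x := by
  simp [FreeLieAlgebra.lift_of_apply]

theorem lie_mem_hopfDenominator_right (x : FreeLieAlgebra R L) {r : FreeLieAlgebra R L}
    (hr : freeProj R L r = 0) : ⁅x, r⁆ ∈ hopfDenominator R L :=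
  LieSubmodule.lie_mem_lie (LieSubmodule.mem_top x) hr

theorem lie_mem_hopfDenominator_left {r : FreeLieAlgebra R L} (hr : freeProj R L r = 0)
    (x : FreeLieAlgebra R L) : ⁅r, x⁆ ∈ hopfDenominator R L := by
  rw [← lie_skew]
  exact neg_mem (lie_mem_hopfDenominator_right x hr)

theorem freeProj_eq_zero_of_mem_hopfDenominator {z : FreeLieAlgebra R L}
    (hz : z ∈ hopfDenominator R L) : freeProj R L z = 0 :=
  LieSubmodule.lie_le_right (relIdeal R L) ⊤ hz

theorem exists_freeProj_section [Module.Projective R L] :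
    ∃ σ : L →ₗ[R] FreeLieAlgebra R L, ∀ x, freeProj R L (σ x) = x := by
  obtain ⟨σ, hσ⟩ := (freeProj R L).toLinearMap.exists_rightInverse_of_surjective
    (LinearMap.range_eq_top.mpr fun x => ⟨FreeLieAlgebra.of R x, freeProj_of x⟩)
  exact ⟨σ, fun x => LinearMap.congr_fun hσ x⟩

section LinearSection

variable {σ : L →ₗ[R] FreeLieAlgebra R L} (hσ : ∀ x, freeProj R L (σ x) = x)
include hσ

theorem lie_section_mem_hopfNumerator {x y : L} (hxy : ⁅x, y⁆ = 0) :
    ⁅σ x, σ y⁆ ∈ hopfNumerator R L :=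
  ⟨by simp [hσ, hxy], LieSubmodule.lie_mem_lie (LieSubmodule.mem_top _) (LieSubmodule.mem_top _)⟩

theorem lie_section_sub_mem_hopfDenominator (z : FreeLieAlgebra R L) (x y : L) :
    ⁅z, σ ⁅x, y⁆⁆ - ⁅z, ⁅σ x, σ y⁆⁆ ∈ hopfDenominator R L := by
  rw [← lie_sub]
  exact lie_mem_hopfDenominator_right z (by simp [hσ])

theorem jacobi_mem_hopfDenominator (x y z : L) :
    ⁅σ x, σ ⁅y, z⁆⁆ + ⁅σ y, σ ⁅z, x⁆⁆ + ⁅σ z, σ ⁅x, y⁆⁆ ∈ hopfDenominator R L := by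
  have hjac : ⁅σ x, ⁅σ y, σ z⁆⁆ + ⁅σ y, ⁅σ z, σ x⁆⁆ + ⁅σ z, ⁅σ x, σ y⁆⁆ = 0 := lie_jacobi _ _ _
  convert add_mem (add_mem (lie_section_sub_mem_hopfDenominator hσ (σ x) y z)
    (lie_section_sub_mem_hopfDenominator hσ (σ y) z x))
    (lie_section_sub_mem_hopfDenominator hσ (σ z) x y) using 1
  rw [← sub_zero (⁅σ x, σ ⁅y, z⁆⁆ + _ + _), ← hjac]
  abel

theorem derived_le_span_lie_section_sup {ι : Type*} (b : ι → L) (hb : span R (Set.range b) = ⊤) :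
    LieSubmodule.toSubmodule ⁅(⊤ : LieIdeal R (FreeLieAlgebra R L)), (⊤ : LieIdeal R _)⁆ ≤
      span R (Set.range fun p : ι × ι => ⁅σ (b p.1), σ (b p.2)⁆) ⊔ hopfDenominator R L := by
  rw [LieSubmodule.lieIdeal_oper_eq_linear_span', span_le]
  rintro _ ⟨u, -, v, -, rfl⟩
  let β : L →ₗ[R] L →ₗ[R] FreeLieAlgebra R L :=
    (LinearMap.mk₂ R (⁅·, ·⁆) add_lie smul_lie lie_add lie_smul).compl₁₂ σ σ
  have hlift : β (freeProj R L u) (freeProj R L v) ∈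
      span R (Set.range fun p : ι × ι => ⁅σ (b p.1), σ (b p.2)⁆) := by
    have := apply_mem_map₂ β (mem_top (x := freeProj R L u)) (mem_top (x := freeProj R L v))
    rwa [← hb, map₂_span_span, Set.image2_range] at this
  have hrel : ∀ w, freeProj R L (w - σ (freeProj R L w)) = 0 := fun w => by simp [hσ]
  have hsplit : ⁅u, v⁆ = ⁅u - σ (freeProj R L u), v⁆
      + ⁅σ (freeProj R L u), v - σ (freeProj R L v)⁆ + β (freeProj R L u) (freeProj R L v) := by
    simp only [β, LinearMap.compl₁₂_apply, LinearMap.mk₂_apply, sub_lie, lie_sub]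
    abel
  rw [SetLike.mem_coe, hsplit]
  exact add_mem (mem_sup_right (add_mem (lie_mem_hopfDenominator_left (hrel u) v)
    (lie_mem_hopfDenominator_right _ (hrel v)))) (mem_sup_left hlift)

end LinearSection

theorem hopfNumerator_le_span_sup {ι₀ ι₁ : Type*} [Fintype ι₁] (g₀ : ι₀ → FreeLieAlgebra R L)
    (g₁ : ι₁ → FreeLieAlgebra R L) (hg₀ : ∀ i, freeProj R L (g₀ i) = 0)
    (hg₁ : LinearIndependent R (freeProj R L ∘ g₁))
    (hspan : LieSubmodule.toSubmodule ⁅(⊤ : LieIdeal R (FreeLieAlgebra R L)), (⊤ : LieIdeal R _)⁆ ≤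
      span R (Set.range g₀ ∪ Set.range g₁) ⊔ hopfDenominator R L) :
    hopfNumerator R L ≤ span R (Set.range g₀) ⊔ hopfDenominator R L := by
  rintro a ⟨haR, haD⟩
  obtain ⟨t, ht, u, hu, rfl⟩ := mem_sup.mp (hspan haD)
  obtain ⟨t₀, ht₀, t₁, ht₁, rfl⟩ := mem_sup.mp ((span_union _ _).le ht)
  obtain ⟨c, rfl⟩ := (mem_span_range_iff_exists_fun R).mp ht₁
  have ht₀R : freeProj R L t₀ = 0 :=
    (span_le (p := LinearMap.ker (freeProj R L).toLinearMap)).mpr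
      (Set.range_subset_iff.mpr hg₀) ht₀
  have hc : ∑ i, c i • freeProj R L (g₁ i) = 0 := by
    have : freeProj R L (t₀ + ∑ i, c i • g₁ i + u) = 0 := haR
    simpa [ht₀R, freeProj_eq_zero_of_mem_hopfDenominator hu] using this
  simp only [Fintype.linearIndependent_iff.mp hg₁ c hc, zero_smul, Finset.sum_const_zero, add_zero]
  exact add_mem (mem_sup_left ht₀) (mem_sup_right hu)

end Hopf

theorem schurRank_eq_rank_hopfQuotient (K L : Type*) [Field K] [LieRing L] [LieAlgebra K L] :
    schurRank K L = Module.rank K (HopfQuotient K L) :=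
  rfl

theorem rank_quotient_comap_eq_card {R V ι : Type*} [Ring R] [StrongRankCondition R]
    [AddCommGroup V] [Module R V] [Fintype ι] {A B : Submodule R V} (g : ι → A)
    (hspan : A ≤ span R (Set.range fun i => (g i : V)) ⊔ B)
    (P : (A ⧸ B.comap A.subtype) →ₗ[R] ι → R)
    (hP : ∀ i, P (Submodule.Quotient.mk (g i)) = Pi.basisFun R ι i) :
    Module.rank R (A ⧸ B.comap A.subtype) = Fintype.card ι := by
  set v : ι → A ⧸ B.comap A.subtype := fun i => Submodule.Quotient.mk (g i)
  have hli : LinearIndependent R v := by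
    refine LinearIndependent.of_comp P ?_
    convert (Pi.basisFun R ι).linearIndependent
    ext1 i
    simp [v, hP]
  have hsp : ⊤ ≤ span R (Set.range v) := by
    rintro q -
    obtain ⟨a, rfl⟩ := Submodule.Quotient.mk_surjective _ q
    obtain ⟨t, ht, u, hu, htu⟩ := mem_sup.mp (hspan a.2)
    obtain ⟨c, rfl⟩ := (mem_span_range_iff_exists_fun R).mp ht
    have hq : Submodule.Quotient.mk a = ∑ i, c i • v i := by
      have : ∑ i, c i • v i = (B.comap A.subtype).mkQ (∑ i, c i • g i) := by simp [v]
      rw [this, mkQ_apply, Submodule.Quotient.eq, mem_comap]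
      simpa [← htu] using hu
    rw [hq]
    exact sum_mem fun i _ => smul_mem _ _ (subset_span ⟨i, rfl⟩)
  rw [rank_eq_card_basis (Basis.mk hli hsp)]

section Pairing

variable {R L M : Type*} [CommRing R] [LieRing L] [LieAlgebra R L] [AddCommGroup M] [Module R M]

def trivialTwoCocycle (ω : L →ₗ[R] L →ₗ[R] M) (hω_alt : ∀ x, ω x x = 0)
    (hω : ∀ x y z, ω x ⁅y, z⁆ = ω ⁅x, y⁆ z + ω y ⁅x, z⁆) :
    twoCocycle R L (TrivialLieModule R L M) :=
  ⟨⟨ω.compr₂ (TrivialLieModule.equiv R L M).symm, hω_alt⟩,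
    (mem_twoCocycle_iff_of_trivial _ _ _ _).mpr hω⟩

def LieAlgebra.ofTwoCocycle.fstHom (c : twoCocycle R L (TrivialLieModule R L M)) :
    ofTwoCocycle c →ₗ⁅R⁆ L where
  toFun p := ((ofProd c).symm p).1
  map_add' _ _ := rfl
  map_smul' _ _ := rfl
  map_lie' := rfl

def LieAlgebra.ofTwoCocycle.sndHom (c : twoCocycle R L (TrivialLieModule R L M)) :
    ofTwoCocycle c →ₗ[R] M where
  toFun p := TrivialLieModule.equiv R L M ((ofProd c).symm p).2
  map_add' _ _ := rfl
  map_smul' _ _ := rfl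

theorem LieAlgebra.ofTwoCocycle.sndHom_lie {ω : L →ₗ[R] L →ₗ[R] M} {hω_alt : ∀ x, ω x x = 0}
    {hω : ∀ x y z, ω x ⁅y, z⁆ = ω ⁅x, y⁆ z + ω y ⁅x, z⁆}
    (p q : ofTwoCocycle (trivialTwoCocycle ω hω_alt hω)) :
    sndHom _ ⁅p, q⁆ = ω (fstHom _ p) (fstHom _ q) := by
  change TrivialLieModule.equiv R L M ((ofProd _).symm ⁅p, q⁆).2 = _
  rw [bracket_ofTwoCocycle]
  simp only [trivialTwoCocycle, LinearMap.compr₂_apply, LinearEquiv.coe_coe, trivial_lie_zero,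
    add_zero, sub_zero]
  rfl

theorem exists_hopfPairing (ω : L →ₗ[R] L →ₗ[R] M) (hω_alt : ∀ x, ω x x = 0)
    (hω : ∀ x y z, ω x ⁅y, z⁆ = ω ⁅x, y⁆ z + ω y ⁅x, z⁆) {σ : L →ₗ[R] FreeLieAlgebra R L}
    (hσ : ∀ x, freeProj R L (σ x) = x) :
    ∃ P : HopfQuotient R L →ₗ[R] M, ∀ x y (h : ⁅σ x, σ y⁆ ∈ hopfNumerator R L),
      P (Submodule.Quotient.mk ⟨⁅σ x, σ y⁆, h⟩) = ω x y := by
  let ψ : FreeLieAlgebra R L →ₗ⁅R⁆ ofTwoCocycle (trivialTwoCocycle ω hω_alt hω) :=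
    FreeLieAlgebra.lift R fun x => ofProd _ (x, 0)
  have hfst : ∀ z, ofTwoCocycle.fstHom _ (ψ z) = freeProj R L z := by
    have : (ofTwoCocycle.fstHom _).comp ψ = freeProj R L := FreeLieAlgebra.hom_ext fun x => by
      simp only [LieHom.comp_apply, ψ, FreeLieAlgebra.lift_of_apply]
      rfl
    exact fun z => LieHom.congr_fun this z
  let Q : FreeLieAlgebra R L →ₗ[R] M := ofTwoCocycle.sndHom _ ∘ₗ ψ.toLinearMap
  have hQ : ∀ u v, Q ⁅u, v⁆ = ω (freeProj R L u) (freeProj R L v) := fun u v => by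
    rw [← hfst, ← hfst, ← ofTwoCocycle.sndHom_lie, ← LieHom.map_lie]
    rfl
  have hker : hopfDenominator R L ≤ LinearMap.ker Q := by
    rw [hopfDenominator, LieSubmodule.lieIdeal_oper_eq_linear_span', span_le]
    rintro _ ⟨u, -, r, hr, rfl⟩
    simp [hQ, show freeProj R L r = 0 from hr]
  refine ⟨(hopfDenominator R L).comap (hopfNumerator R L).subtype |>.liftQ
    (Q ∘ₗ (hopfNumerator R L).subtype) (by rw [LinearMap.ker_comp]; exact comap_mono hker),
    fun x y h => ?_⟩
  rw [Submodule.liftQ_apply, LinearMap.comp_apply, Submodule.subtype_apply, hQ, hσ, hσ]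

end Pairing

def wedge {R L : Type*} [CommRing R] [AddCommGroup L] [Module R L] (f g : L →ₗ[R] R) :
    L →ₗ[R] L →ₗ[R] R :=
  f.smulRight g - g.smulRight f

@[simp]
theorem wedge_apply {R L : Type*} [CommRing R] [AddCommGroup L] [Module R L] (f g : L →ₗ[R] R)
    (x y : L) : wedge f g x y = f x * g y - g x * f y := by
  simp [wedge, mul_comm]

/-- `b i` is the basis vector `x_{i+1}` of the paper. -/
structure IsModelFiliformBasis {R L : Type*} [CommRing R] [LieRing L] [LieAlgebra R L]
    (b : Basis (Fin 5) R L) : Prop where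
  lie_zero_one : ⁅b 0, b 1⁆ = b 2
  lie_zero_two : ⁅b 0, b 2⁆ = b 3
  lie_zero_three : ⁅b 0, b 3⁆ = b 4
  lie_zero_four : ⁅b 0, b 4⁆ = 0
  lie_one_two : ⁅b 1, b 2⁆ = 0
  lie_one_three : ⁅b 1, b 3⁆ = 0
  lie_one_four : ⁅b 1, b 4⁆ = 0
  lie_two_three : ⁅b 2, b 3⁆ = 0
  lie_two_four : ⁅b 2, b 4⁆ = 0
  lie_three_four : ⁅b 3, b 4⁆ = 0

namespace IsModelFiliformBasis

variable {R L : Type*} [CommRing R] [LieRing L] [LieAlgebra R L] {b : Basis (Fin 5) R L}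
  {σ : L →ₗ[R] FreeLieAlgebra R L}

theorem lie_eq (hb : IsModelFiliformBasis b) (x y : L) :
    ⁅x, y⁆ = (b.repr x 0 * b.repr y 1 - b.repr x 1 * b.repr y 0) • b 2
      + (b.repr x 0 * b.repr y 2 - b.repr x 2 * b.repr y 0) • b 3
      + (b.repr x 0 * b.repr y 3 - b.repr x 3 * b.repr y 0) • b 4 := by
  conv_lhs => rw [← b.sum_repr x, ← b.sum_repr y]
  simp only [Fin.sum_univ_five, add_lie, lie_add, smul_lie, lie_smul, lie_self, hb.lie_zero_one,
    hb.lie_zero_two, hb.lie_zero_three, hb.lie_zero_four, hb.lie_one_two, hb.lie_one_three,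
    hb.lie_one_four, hb.lie_two_three, hb.lie_two_four, hb.lie_three_four,
    lie_swap hb.lie_zero_one, lie_swap hb.lie_zero_two, lie_swap hb.lie_zero_three,
    lie_swap hb.lie_zero_four, lie_swap hb.lie_one_two, lie_swap hb.lie_one_three,
    lie_swap hb.lie_one_four, lie_swap hb.lie_two_three, lie_swap hb.lie_two_four,
    lie_swap hb.lie_three_four]
  module

theorem repr_lie (hb : IsModelFiliformBasis b) (x y : L) (k : Fin 5) :
    b.repr ⁅x, y⁆ k = ![0, 0,
      b.repr x 0 * b.repr y 1 - b.repr x 1 * b.repr y 0,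
      b.repr x 0 * b.repr y 2 - b.repr x 2 * b.repr y 0,
      b.repr x 0 * b.repr y 3 - b.repr x 3 * b.repr y 0] k := by
  rw [hb.lie_eq]
  fin_cases k <;> simp

variable (b) in
noncomputable def cocycle : Fin 3 → L →ₗ[R] L →ₗ[R] R :=
  ![wedge (b.coord 0) (b.coord 4), wedge (b.coord 1) (b.coord 2),
    wedge (b.coord 1) (b.coord 4) - wedge (b.coord 2) (b.coord 3)]

variable (b) in
theorem cocycle_self (k : Fin 3) (x : L) : cocycle b k x x = 0 := by
  fin_cases k <;> simp [cocycle, mul_comm]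

theorem cocycle_lie (hb : IsModelFiliformBasis b) (k : Fin 3) (x y z : L) :
    cocycle b k x ⁅y, z⁆ = cocycle b k ⁅x, y⁆ z + cocycle b k y ⁅x, z⁆ := by
  fin_cases k <;>
    simp only [cocycle, Fin.isValue, Fin.zero_eta, Fin.mk_one, Fin.reduceFinMk, Matrix.cons_val,
      Matrix.cons_val_zero, Matrix.cons_val_one, LinearMap.sub_apply, wedge_apply,
      Basis.coord_apply, hb.repr_lie] <;>
    ring

def cyclePairs : Fin 3 → Fin 5 × Fin 5 := ![(0, 4), (1, 2), (1, 4)]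

def leadPairs : Fin 3 → Fin 5 × Fin 5 := ![(0, 1), (0, 2), (0, 3)]

theorem cocycle_cyclePairs (i k : Fin 3) :
    cocycle b k (b (cyclePairs i).1) (b (cyclePairs i).2) = Pi.basisFun R (Fin 3) i k := by
  fin_cases i <;> fin_cases k <;> simp [cocycle, cyclePairs]

theorem lie_section_cyclePairs_mem_hopfNumerator (hb : IsModelFiliformBasis b)
    (hσ : ∀ x, freeProj R L (σ x) = x) (k : Fin 3) :
    ⁅σ (b (cyclePairs k).1), σ (b (cyclePairs k).2)⁆ ∈ hopfNumerator R L := by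
  apply lie_section_mem_hopfNumerator hσ
  fin_cases k
  exacts [hb.lie_zero_four, hb.lie_one_two, hb.lie_one_four]

theorem lie_section_mem_hopfDenominator (hb : IsModelFiliformBasis b)
    (hσ : ∀ x, freeProj R L (σ x) = x) :
    ⁅σ (b 1), σ (b 3)⁆ ∈ hopfDenominator R L ∧ ⁅σ (b 2), σ (b 4)⁆ ∈ hopfDenominator R L ∧
      ⁅σ (b 3), σ (b 4)⁆ ∈ hopfDenominator R L ∧
      ⁅σ (b 2), σ (b 3)⁆ + ⁅σ (b 1), σ (b 4)⁆ ∈ hopfDenominator R L := by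
  have h012 := jacobi_mem_hopfDenominator hσ (b 0) (b 1) (b 2)
  have h023 := jacobi_mem_hopfDenominator hσ (b 0) (b 2) (b 3)
  have h024 := jacobi_mem_hopfDenominator hσ (b 0) (b 2) (b 4)
  have h013 := jacobi_mem_hopfDenominator hσ (b 0) (b 1) (b 3)
  simp only [hb.lie_zero_one, hb.lie_zero_two, hb.lie_one_two, hb.lie_one_three,
    hb.lie_two_three, hb.lie_two_four, lie_swap hb.lie_zero_two, lie_swap hb.lie_zero_three,
    lie_swap hb.lie_zero_four, neg_zero, map_neg, map_zero, lie_neg, lie_zero, lie_self, zero_add,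
    add_zero, neg_mem_iff] at h012 h023 h024 h013
  refine ⟨h012, h023, ?_, ?_⟩
  · rw [← lie_skew, neg_mem_iff]
    exact h024
  · rw [← lie_skew, ← neg_mem_iff]
    convert h013 using 1
    abel

theorem lie_section_mem_span_sup (hb : IsModelFiliformBasis b) (hσ : ∀ x, freeProj R L (σ x) = x)
    (i j : Fin 5) :
    ⁅σ (b i), σ (b j)⁆ ∈ span R (Set.range ((fun p => ⁅σ (b p.1), σ (b p.2)⁆) ∘ cyclePairs) ∪
      Set.range ((fun p => ⁅σ (b p.1), σ (b p.2)⁆) ∘ leadPairs)) ⊔ hopfDenominator R L := by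
  wlog hij : i ≤ j generalizing i j
  · rw [← lie_skew]
    exact neg_mem (this j i (le_of_not_ge hij))
  obtain ⟨h13, h24, h34, h23⟩ := hb.lie_section_mem_hopfDenominator hσ
  set v : Fin 5 × Fin 5 → FreeLieAlgebra R L := fun p => ⁅σ (b p.1), σ (b p.2)⁆
  set N := span R (Set.range (v ∘ cyclePairs) ∪ Set.range (v ∘ leadPairs)) ⊔ hopfDenominator R L
  have hcyc : ∀ k, v (cyclePairs k) ∈ N := fun k => mem_sup_left (subset_span (Or.inl ⟨k, rfl⟩))
  have hlead : ∀ k, v (leadPairs k) ∈ N := fun k => mem_sup_left (subset_span (Or.inr ⟨k, rfl⟩))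
  fin_cases i <;> fin_cases j
  all_goals first
    | exact absurd hij (by decide)
    | exact (lie_self (σ (b _))).symm ▸ zero_mem N
    | exact hcyc 0 | exact hcyc 1 | exact hcyc 2
    | exact hlead 0 | exact hlead 1 | exact hlead 2
    | exact mem_sup_right h13 | exact mem_sup_right h24 | exact mem_sup_right h34
    | have h23' := sub_mem (mem_sup_right h23 : _ ∈ N) (hcyc 2)
      rwa [show v (cyclePairs 2) = ⁅σ (b 1), σ (b 4)⁆ from rfl, add_sub_cancel_right] at h23'

theorem hopfNumerator_le_span_cyclePairs_sup (hb : IsModelFiliformBasis b)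
    (hσ : ∀ x, freeProj R L (σ x) = x) :
    hopfNumerator R L ≤ span R (Set.range ((fun p => ⁅σ (b p.1), σ (b p.2)⁆) ∘ cyclePairs)) ⊔
      hopfDenominator R L := by
  refine hopfNumerator_le_span_sup _ ((fun p => ⁅σ (b p.1), σ (b p.2)⁆) ∘ leadPairs)
    (fun k => ?_) ?_ ?_
  · fin_cases k <;> simp [cyclePairs, hσ, hb.lie_zero_four, hb.lie_one_two, hb.lie_one_four]
  · have : freeProj R L ∘ (fun p => ⁅σ (b p.1), σ (b p.2)⁆) ∘ leadPairs = b ∘ ![2, 3, 4] := by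
      ext k
      fin_cases k <;> simp [leadPairs, hσ, hb.lie_zero_one, hb.lie_zero_two, hb.lie_zero_three]
    rw [this]
    exact b.linearIndependent.comp _ (by decide)
  · refine (derived_le_span_lie_section_sup hσ b b.span_eq).trans (sup_le ?_ le_sup_right)
    rw [span_le, Set.range_subset_iff]
    exact fun p => hb.lie_section_mem_span_sup hσ p.1 p.2

end IsModelFiliformBasis

theorem schur_multiplier_L7517_general (K : Type*) (L : Type*) [Field K] [LieRing L] [LieAlgebra K L]
    (b : Basis (Fin 5) K L)
    (h12 : ⁅b 0, b 1⁆ = b 2) (h13 : ⁅b 0, b 2⁆ = b 3) (h14 : ⁅b 0, b 3⁆ = b 4)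
    (h15 : ⁅b 0, b 4⁆ = 0) (h23 : ⁅b 1, b 2⁆ = 0) (h24 : ⁅b 1, b 3⁆ = 0) (h25 : ⁅b 1, b 4⁆ = 0)
    (h34 : ⁅b 2, b 3⁆ = 0) (h35 : ⁅b 2, b 4⁆ = 0) (h45 : ⁅b 3, b 4⁆ = 0) :
    schurRank K L = 3 ∧ (finrank K L + 1) / 2 = 3 := by
  have hb : IsModelFiliformBasis b := ⟨h12, h13, h14, h15, h23, h24, h25, h34, h35, h45⟩
  refine ⟨?_, by rw [finrank_eq_card_basis b]; rfl⟩
  obtain ⟨σ, hσ⟩ := exists_freeProj_section (R := K) (L := L)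
  choose P hP using fun k =>
    exists_hopfPairing (IsModelFiliformBasis.cocycle b k) (IsModelFiliformBasis.cocycle_self b k)
      (hb.cocycle_lie k) hσ
  rw [schurRank_eq_rank_hopfQuotient,
    rank_quotient_comap_eq_card (fun k => ⟨_, hb.lie_section_cyclePairs_mem_hopfNumerator hσ k⟩)
      (hb.hopfNumerator_le_span_cyclePairs_sup hσ) (LinearMap.pi P) fun i => ?_]
  · simp
  · ext k
    rw [LinearMap.pi_apply, hP, IsModelFiliformBasis.cocycle_cyclePairs]

theorem schur_multiplier_L7517 (K : Type*) (L : Type*) [Field K] [LieRing L] [LieAlgebra K L]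
    (hchar : ringChar K ≠ 2) (b : Basis (Fin 5) K L)
    (h12 : ⁅b 0, b 1⁆ = b 2) (h13 : ⁅b 0, b 2⁆ = b 3) (h14 : ⁅b 0, b 3⁆ = b 4)
    (h15 : ⁅b 0, b 4⁆ = 0) (h23 : ⁅b 1, b 2⁆ = 0) (h24 : ⁅b 1, b 3⁆ = 0) (h25 : ⁅b 1, b 4⁆ = 0)
    (h34 : ⁅b 2, b 3⁆ = 0) (h35 : ⁅b 2, b 4⁆ = 0) (h45 : ⁅b 3, b 4⁆ = 0) :
    schurRank K L = 3 ∧ (finrank K L + 1) / 2 = 3 :=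
  schur_multiplier_L7517_general K L b h12 h13 h14 h15 h23 h24 h25 h34 h35 h45
end
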